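/- arXiv:1311.2361 — 6 statements merged into one kernel-verified Lean document; each statement's English description precedes it below -/
import Mathlib

section
/- Let n be a positive integer and A an n-by-n complex matrix with p(A) finite, say p(A) = j and a(A) = k. Then one of the following holds: (a) j = k ≤ n − 1; (b) j ≤ k − 1 and j + k ≤ n − 1; (c) j ≤ k − 2 and j + k = n. -/
open Matrix

noncomputable section

/-- An `ι`-by-`ι` complex matrix `A` is a *partial isometry* if `‖Ax‖ = ‖x‖` for every
vector `x` in the orthogonal complement of `ker A` (Euclidean structure). -/
def Matrix.IsPartialIsometry {ι : Type*} [Fintype ι] [DecidableEq ι]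
    (A : Matrix ι ι ℂ) : Prop :=
  ∀ x ∈ (LinearMap.ker (Matrix.toEuclideanLin A))ᗮ, ‖Matrix.toEuclideanLin A x‖ = ‖x‖

/-- The *power partial isometry index* `p(A)`: the supremum (in `ℕ∞`, possibly `⊤`) of the
nonnegative integers `j` such that `I, A, A², …, A^j` are all partial isometries. -/
def Matrix.pIndex {ι : Type*} [Fintype ι] [DecidableEq ι] (A : Matrix ι ι ℂ) : ℕ∞ :=
  sSup ((↑) '' {j : ℕ | ∀ i ≤ j, (A ^ i).IsPartialIsometry})

/-- The *ascent* `a(A)`: the smallest nonnegative integer `k` with `ker A^k = ker A^(k+1)`. -/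
def Matrix.ascent {ι : Type*} [Fintype ι] [DecidableEq ι] (A : Matrix ι ι ℂ) : ℕ :=
  sInf {k : ℕ | LinearMap.ker (Matrix.toEuclideanLin (A ^ k)) =
    LinearMap.ker (Matrix.toEuclideanLin (A ^ (k + 1)))}

/-- `A` is unitarily similar to `B` (allowing different, necessarily equipotent, index types):
`B = U* A U` for some unitary `U`. -/
def Matrix.UnitarilySimilarTo {ι κ : Type*} [Fintype ι] [Fintype κ] [DecidableEq ι]
    [DecidableEq κ] (A : Matrix ι ι ℂ) (B : Matrix κ κ ℂ) : Prop :=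
  ∃ U : Matrix ι κ ℂ, Uᴴ * U = 1 ∧ U * Uᴴ = 1 ∧ B = Uᴴ * A * U

/-- The `q`-by-`q` nilpotent Jordan block `J_q`. -/
def JordanBlock (q : ℕ) : Matrix (Fin q) (Fin q) ℂ :=
  Matrix.of fun a b => if (b : ℕ) = (a : ℕ) + 1 then 1 else 0

/-- `A` is of class `S_n`: a contraction whose eigenvalues all have moduli strictly
less than `1` and with `rank (1 - A*A) = 1`. -/
def Matrix.IsClassSn {n : ℕ} (A : Matrix (Fin n) (Fin n) ℂ) : Prop :=
  (∀ x : EuclideanSpace ℂ (Fin n), ‖Matrix.toEuclideanLin A x‖ ≤ ‖x‖) ∧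
  (∀ z ∈ spectrum ℂ A, ‖z‖ < 1) ∧
  (1 - Aᴴ * A).rank = 1

/-! Let `T` be a partial isometry, `P` the orthogonal projection onto `(ker T)ᗮ` and
`C = P T` the compression of `T` to `(ker T)ᗮ`. Since `T` is isometric on `(ker T)ᗮ` and
`T^(m+1) x = T (C^m (P x))`, the power `T^(m+1)` is a partial isometry iff `C^m` is, and
`ker T^(m+1) = P⁻¹ (ker C^m)`. Hence `p(C) = p(T) - 1` and `a(C) = a(T) - 1`. Moreover `T` maps
`ker C` injectively into `ker T`, and onto it only if `C` is a partial isometry.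

Compressing `j = p(T)` times splits off `j` nonzero kernels and leaves an operator that is not
a partial isometry and has ascent `a(T) - j`; so `j < n`. If `j < a(T)`, that last operator has
a kernel that is neither `0` nor the whole space, so its space has dimension at least
`max (a(T) - j) 2`; and since kernel dimensions drop strictly at the last step, each of the `j`
kernels has dimension at least `2`. Hence `j + max a(T) (j + 2) ≤ n`. -/
open Module Submodule

theorem Submodule.orthogonal_comap_orthogonalProjectionOnto {𝕜 E : Type*} [RCLike 𝕜]
    [NormedAddCommGroup E] [InnerProductSpace 𝕜 E] (K : Submodule 𝕜 E)
    [K.HasOrthogonalProjection] (N : Submodule 𝕜 K) :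
    (N.comap (K.orthogonalProjectionOnto : E →ₗ[𝕜] K))ᗮ = Nᗮ.map K.subtype := by
  ext x
  constructor
  · intro hx
    have hKN : Kᗮ ≤ N.comap (K.orthogonalProjectionOnto : E →ₗ[𝕜] K) := fun y hy => by
      simp [orthogonalProjectionOnto_eq_zero_iff.2 hy]
    have hxK : x ∈ K := by simpa [orthogonal_orthogonal] using orthogonal_le hKN hx
    refine ⟨⟨x, hxK⟩, fun u hu => ?_, rfl⟩
    simpa [orthogonalProjectionOnto_mem_subspace_eq_self] using hx u (by simpa using hu)
  · rintro ⟨v, hv, rfl⟩ y hy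
    change inner 𝕜 y (v : E) = 0
    rw [← inner_orthogonalProjectionOnto_eq_of_mem_right]
    exact hv _ hy

namespace LinearMap

section PartialIsometry

variable {𝕜 E F : Type*} [RCLike 𝕜] [NormedAddCommGroup E] [InnerProductSpace 𝕜 E]
  [NormedAddCommGroup F] [InnerProductSpace 𝕜 F]

def IsPartialIsometry (T : E →ₗ[𝕜] F) : Prop :=
  ∀ x ∈ (ker T)ᗮ, ‖T x‖ = ‖x‖

theorem ker_ne_top_of_not_isPartialIsometry {T : E →ₗ[𝕜] F} (hT : ¬ T.IsPartialIsometry) :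
    ker T ≠ ⊤ := fun h => hT fun x hx => by
  rw [h, top_orthogonal_eq_bot, mem_bot] at hx
  simp [hx]

theorem IsPartialIsometry.isometry_of_ker_eq_bot {T : E →ₗ[𝕜] F} (hT : T.IsPartialIsometry)
    (h : ker T = ⊥) (x : E) : ‖T x‖ = ‖x‖ :=
  hT x (by simp [h])

theorem IsPartialIsometry.norm_apply_coe {T : E →ₗ[𝕜] F} (hT : T.IsPartialIsometry)
    (v : (ker T)ᗮ) : ‖T v‖ = ‖v‖ :=
  hT v v.2

def IsPartialIsometry.restrictKerOrthogonal {T : E →ₗ[𝕜] F} (hT : T.IsPartialIsometry) :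
    (ker T)ᗮ →ₗᵢ[𝕜] F :=
  ⟨T ∘ₗ (ker T)ᗮ.subtype, hT.norm_apply_coe⟩

theorem IsPartialIsometry.apply_coe_eq_zero_iff {T : E →ₗ[𝕜] F} (hT : T.IsPartialIsometry)
    (v : (ker T)ᗮ) : T v = 0 ↔ v = 0 :=
  map_eq_zero_iff _ hT.restrictKerOrthogonal.injective

end PartialIsometry

section Ascent

variable {R M : Type*} [Semiring R] [AddCommMonoid M] [Module R M]

def ascent (T : Module.End R M) : ℕ :=
  sInf {m | ker (T ^ m) = ker (T ^ (m + 1))}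

theorem ascent_le {T : Module.End R M} {m : ℕ} (h : ker (T ^ m) = ker (T ^ (m + 1))) :
    T.ascent ≤ m :=
  Nat.sInf_le h

theorem ker_pow_ne_ker_pow_succ_of_lt_ascent {T : Module.End R M} {m : ℕ}
    (h : m < T.ascent) : ker (T ^ m) ≠ ker (T ^ (m + 1)) :=
  Nat.notMem_of_lt_sInf h

variable {K V : Type*} [DivisionRing K] [AddCommGroup V] [Module K V] [FiniteDimensional K V]
  (T : Module.End K V)

theorem ker_pow_finrank_eq_ker_pow_succ :
    ker (T ^ finrank K V) = ker (T ^ (finrank K V + 1)) :=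
  (End.ker_pow_eq_ker_pow_finrank_of_le (Nat.le_succ _)).symm

theorem ascent_le_finrank : T.ascent ≤ finrank K V :=
  ascent_le (ker_pow_finrank_eq_ker_pow_succ T)

theorem ker_pow_ascent_eq_ker_pow_succ : ker (T ^ T.ascent) = ker (T ^ (T.ascent + 1)) :=
  Nat.sInf_mem (s := {m | ker (T ^ m) = ker (T ^ (m + 1))})
    ⟨_, ker_pow_finrank_eq_ker_pow_succ T⟩

theorem ascent_pos_iff : 0 < T.ascent ↔ ker T ≠ ⊥ := by
  refine ⟨fun h hT => ker_pow_ne_ker_pow_succ_of_lt_ascent h (by simp [hT, End.one_eq_id]),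
    fun hT => Nat.pos_of_ne_zero fun h => hT ?_⟩
  simpa [h, End.one_eq_id] using (ker_pow_ascent_eq_ker_pow_succ T).symm

end Ascent

variable {𝕜 E : Type*} [RCLike 𝕜] [NormedAddCommGroup E] [InnerProductSpace 𝕜 E]

theorem isPartialIsometry_one : (1 : Module.End 𝕜 E).IsPartialIsometry :=
  fun _ _ => rfl

theorem IsPartialIsometry.pow_of_ker_eq_bot {T : Module.End 𝕜 E} (hT : T.IsPartialIsometry)
    (h : ker T = ⊥) (m : ℕ) : (T ^ m).IsPartialIsometry := by
  suffices ∀ x, ‖(T ^ m) x‖ = ‖x‖ from fun x _ => this x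
  induction m with
  | zero => simp
  | succ m ih =>
    intro x
    rw [pow_succ', End.mul_apply, hT.isometry_of_ker_eq_bot h, ih]

section Compression

variable [FiniteDimensional 𝕜 E] (T : Module.End 𝕜 E)

def compression : Module.End 𝕜 (ker T)ᗮ :=
  (ker T)ᗮ.orthogonalProjectionOnto.toLinearMap ∘ₗ T ∘ₗ (ker T)ᗮ.subtype

theorem sub_starProjection_mem_ker (x : E) : x - (ker T)ᗮ.starProjection x ∈ ker T := by
  have := sub_starProjection_mem_orthogonal (K := (ker T)ᗮ) x
  rwa [orthogonal_orthogonal] at this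

theorem apply_starProjection_ker_orthogonal (x : E) : T ((ker T)ᗮ.starProjection x) = T x := by
  have := sub_starProjection_mem_ker T x
  rwa [mem_ker, map_sub, sub_eq_zero, eq_comm] at this

theorem pow_succ_apply_starProjection (m : ℕ) (x : E) :
    (T ^ (m + 1)) ((ker T)ᗮ.starProjection x) = (T ^ (m + 1)) x := by
  rw [pow_succ, End.mul_apply, End.mul_apply, apply_starProjection_ker_orthogonal]

theorem pow_succ_apply_coe (m : ℕ) (v : (ker T)ᗮ) :
    (T ^ (m + 1)) v = T ((T.compression ^ m) v) := by
  induction m generalizing v with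
  | zero => simp
  | succ m ih =>
    rw [pow_succ, End.mul_apply, ← pow_succ_apply_starProjection, pow_succ,
      End.mul_apply]
    exact ih (T.compression v)

theorem ker_pow_succ_eq_comap {T : Module.End 𝕜 E} (hT : T.IsPartialIsometry) (m : ℕ) :
    ker (T ^ (m + 1)) =
      (ker (T.compression ^ m)).comap ((ker T)ᗮ.orthogonalProjectionOnto : E →ₗ[𝕜] (ker T)ᗮ) := by
  ext x
  rw [mem_ker, mem_comap, mem_ker, ← pow_succ_apply_starProjection, starProjection_apply,
    pow_succ_apply_coe, hT.apply_coe_eq_zero_iff]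
  rfl

variable {T}

theorem ker_pow_succ_eq_ker_pow_succ_iff (hT : T.IsPartialIsometry) (m : ℕ) :
    ker (T ^ (m + 1)) = ker (T ^ (m + 1 + 1)) ↔
      ker (T.compression ^ m) = ker (T.compression ^ (m + 1)) := by
  rw [ker_pow_succ_eq_comap hT, ker_pow_succ_eq_comap hT]
  have hP : Function.Surjective ((ker T)ᗮ.orthogonalProjectionOnto : E →ₗ[𝕜] (ker T)ᗮ) :=
    fun v => ⟨v, orthogonalProjectionOnto_mem_subspace_eq_self v⟩
  exact (comap_injective_of_surjective hP).eq_iff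

theorem ascent_eq_ascent_compression_add_one (hT : T.IsPartialIsometry) (hker : ker T ≠ ⊥) :
    T.ascent = T.compression.ascent + 1 := by
  obtain ⟨s, hs⟩ := Nat.exists_eq_add_one_of_ne_zero ((ascent_pos_iff T).2 hker).ne'
  have hle := ascent_le ((ker_pow_succ_eq_ker_pow_succ_iff hT s).1
    (hs ▸ ker_pow_ascent_eq_ker_pow_succ T))
  have hge := ascent_le ((ker_pow_succ_eq_ker_pow_succ_iff hT _).2
    (ker_pow_ascent_eq_ker_pow_succ T.compression))
  omega

theorem isPartialIsometry_pow_succ_iff (hT : T.IsPartialIsometry) (m : ℕ) :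
    (T ^ (m + 1)).IsPartialIsometry ↔ (T.compression ^ m).IsPartialIsometry := by
  simp only [IsPartialIsometry, ker_pow_succ_eq_comap hT,
    orthogonal_comap_orthogonalProjectionOnto, mem_map, forall_exists_index, and_imp,
    forall_apply_eq_imp_iff₂, subtype_apply, pow_succ_apply_coe, hT.norm_apply_coe]
  rfl

variable (T) in
theorem map_ker_compression_le : (ker T.compression).map (T ∘ₗ (ker T)ᗮ.subtype) ≤ ker T := by
  rintro _ ⟨v, hv, rfl⟩
  have hPTv : (ker T)ᗮ.starProjection (T v) = 0 := congrArg Subtype.val hv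
  simpa only [comp_apply, subtype_apply, hPTv, sub_zero] using sub_starProjection_mem_ker T (T v)

theorem finrank_ker_compression_eq (hT : T.IsPartialIsometry) :
    finrank 𝕜 (ker T.compression) =
      finrank 𝕜 ((ker T.compression).map (T ∘ₗ (ker T)ᗮ.subtype)) :=
  (equivMapOfInjective _ hT.restrictKerOrthogonal.injective _).finrank_eq

theorem isPartialIsometry_compression_of_ker_le (hT : T.IsPartialIsometry)
    (h : ker T ≤ (ker T.compression).map (T ∘ₗ (ker T)ᗮ.subtype)) :
    T.compression.IsPartialIsometry := by
  intro v hv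
  have hz : T v - T.compression v ∈ ker T := sub_starProjection_mem_ker T (T v)
  obtain ⟨w, hw, hTw⟩ := h hz
  have h₁ : inner 𝕜 (T v) (T v - T.compression v) = 0 := by
    rw [← hTw]
    exact (hT.restrictKerOrthogonal.inner_map_map v w).trans (inner_left_of_mem_orthogonal hw hv)
  have h₂ : inner 𝕜 (T.compression v : E) (T v - T.compression v) = 0 :=
    inner_right_of_mem_orthogonal (T.compression v).2 (by rwa [orthogonal_orthogonal])
  have hTv : T v = T.compression v := by
    rw [← sub_eq_zero, ← inner_self_eq_zero (𝕜 := 𝕜), inner_sub_left, h₁, h₂, sub_zero]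
  change ‖(T.compression v : E)‖ = ‖v‖
  rw [← hTv, hT.norm_apply_coe]

theorem finrank_ker_compression_le (hT : T.IsPartialIsometry) :
    finrank 𝕜 (ker T.compression) ≤ finrank 𝕜 (ker T) :=
  (finrank_ker_compression_eq hT).trans_le (finrank_mono (map_ker_compression_le T))

theorem finrank_ker_compression_lt (hT : T.IsPartialIsometry)
    (hC : ¬ T.compression.IsPartialIsometry) :
    finrank 𝕜 (ker T.compression) < finrank 𝕜 (ker T) :=
  (finrank_ker_compression_eq hT).trans_lt <| finrank_lt_finrank_of_lt <|
    (map_ker_compression_le T).lt_of_ne fun h =>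
      hC (isPartialIsometry_compression_of_ker_le hT h.ge)

end Compression

def HasPIndex (T : Module.End 𝕜 E) (j : ℕ) : Prop :=
  (∀ i ≤ j, (T ^ i).IsPartialIsometry) ∧ ¬ (T ^ (j + 1)).IsPartialIsometry

theorem hasPIndex_zero_iff {T : Module.End 𝕜 E} : T.HasPIndex 0 ↔ ¬ T.IsPartialIsometry := by
  simp [HasPIndex, isPartialIsometry_one]

namespace HasPIndex

variable {T : Module.End 𝕜 E} {j : ℕ}

theorem isPartialIsometry (h : T.HasPIndex (j + 1)) : T.IsPartialIsometry := by
  simpa using h.1 1 (by omega)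

theorem ker_ne_bot (h : T.HasPIndex (j + 1)) : ker T ≠ ⊥ := fun hbot =>
  h.2 (h.isPartialIsometry.pow_of_ker_eq_bot hbot _)

variable [FiniteDimensional 𝕜 E]

theorem compression (h : T.HasPIndex (j + 1)) : T.compression.HasPIndex j :=
  ⟨fun i hi => (isPartialIsometry_pow_succ_iff h.isPartialIsometry i).1 (h.1 (i + 1) (by omega)),
    fun hC => h.2 ((isPartialIsometry_pow_succ_iff h.isPartialIsometry (j + 1)).2 hC)⟩

theorem ascent_eq (h : T.HasPIndex (j + 1)) : T.ascent = T.compression.ascent + 1 :=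
  ascent_eq_ascent_compression_add_one h.isPartialIsometry h.ker_ne_bot

theorem le_ascent (h : T.HasPIndex j) : j ≤ T.ascent := by
  induction j generalizing E with
  | zero => omega
  | succ j ih =>
    have := ih h.compression
    rw [h.ascent_eq]
    omega

theorem lt_finrank (h : T.HasPIndex j) : j < finrank 𝕜 E := by
  induction j generalizing E with
  | zero =>
    have := finrank_lt (ker_ne_top_of_not_isPartialIsometry (hasPIndex_zero_iff.1 h))
    omega
  | succ j ih =>
    have := ih h.compression
    have := finrank_add_finrank_orthogonal (ker T)
    have := one_le_finrank_iff.2 h.ker_ne_bot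
    omega

theorem two_le_finrank_ker (h : T.HasPIndex j) (hj : 0 < j) (ha : j < T.ascent) :
    2 ≤ finrank 𝕜 (ker T) := by
  induction j generalizing E with
  | zero => omega
  | succ j ih =>
    rw [h.ascent_eq] at ha
    rcases Nat.eq_zero_or_pos j with rfl | hj
    · have := one_le_finrank_iff.2 ((ascent_pos_iff T.compression).1 (by omega))
      have := finrank_ker_compression_lt h.isPartialIsometry
        (hasPIndex_zero_iff.1 h.compression)
      omega
    · have := ih h.compression hj (by omega)
      have := finrank_ker_compression_le h.isPartialIsometry
      omega

theorem add_max_le_finrank (h : T.HasPIndex j) (ha : j < T.ascent) :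
    j + max T.ascent (j + 2) ≤ finrank 𝕜 E := by
  induction j generalizing E with
  | zero =>
    have := ascent_le_finrank T
    have := finrank_lt (ker_ne_top_of_not_isPartialIsometry (hasPIndex_zero_iff.1 h))
    have := one_le_finrank_iff.2 ((ascent_pos_iff T).1 ha)
    omega
  | succ j ih =>
    have := h.two_le_finrank_ker (by omega) ha
    have := finrank_add_finrank_orthogonal (ker T)
    rw [h.ascent_eq] at ha ⊢
    have := ih h.compression (by omega)
    omega

end HasPIndex

end LinearMap

namespace Matrix

variable {ι : Type*} [Fintype ι] [DecidableEq ι]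

theorem toEuclideanLin_pow {𝕜 : Type*} [RCLike 𝕜] (A : Matrix ι ι 𝕜) (m : ℕ) :
    toEuclideanLin (A ^ m) = toEuclideanLin A ^ m := by
  rw [← coe_toEuclideanCLM_eq_toEuclideanLin, map_pow, ContinuousLinearMap.toLinearMap_pow,
    coe_toEuclideanCLM_eq_toEuclideanLin]

theorem isPartialIsometry_pow_iff (A : Matrix ι ι ℂ) (m : ℕ) :
    (A ^ m).IsPartialIsometry ↔ (toEuclideanLin A ^ m).IsPartialIsometry := by
  rw [← toEuclideanLin_pow]
  rfl

theorem ascent_eq_ascent_toEuclideanLin (A : Matrix ι ι ℂ) :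
    A.ascent = (toEuclideanLin A).ascent := by
  simp only [Matrix.ascent, LinearMap.ascent, toEuclideanLin_pow]

theorem hasPIndex_toEuclideanLin {A : Matrix ι ι ℂ} {j : ℕ} (hp : A.pIndex = j) :
    (toEuclideanLin A).HasPIndex j := by
  set S := {m : ℕ | ∀ i ≤ m, (A ^ i).IsPartialIsometry}
  have hS0 : 0 ∈ S := fun i hi => by
    rw [Nat.le_zero.1 hi, isPartialIsometry_pow_iff, pow_zero]
    exact LinearMap.isPartialIsometry_one
  have hbdd : BddAbove S := ⟨j, fun s hs => by
    exact_mod_cast (le_sSup ⟨s, hs, rfl⟩ : (s : ℕ∞) ≤ A.pIndex).trans_eq hp⟩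
  have hj : sSup S = j := by
    rw [Matrix.pIndex, sSup_image, ← ENat.natCast_sSup hbdd] at hp
    exact_mod_cast hp
  have hjS : j ∈ S := hj ▸ Nat.sSup_mem ⟨0, hS0⟩ hbdd
  have hj1S : j + 1 ∉ S := fun h => by
    have := le_csSup hbdd h
    omega
  refine ⟨fun i hi => (isPartialIsometry_pow_iff A i).1 (hjS i hi), fun hA => hj1S ?_⟩
  intro i hi
  rcases Nat.le_add_one_iff.1 hi with hi | rfl
  · exact hjS i hi
  · exact (isPartialIsometry_pow_iff A _).2 hA

end Matrix

theorem pIndex_ascent_trichotomy_general (n : ℕ) (A : Matrix (Fin n) (Fin n) ℂ)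
    (j k : ℕ) (hp : A.pIndex = (j : ℕ∞)) (ha : A.ascent = k) :
    (j = k ∧ j ≤ n - 1) ∨ (j + 1 ≤ k ∧ j + k ≤ n - 1) ∨ (j + 2 ≤ k ∧ j + k = n) := by
  have hA := Matrix.hasPIndex_toEuclideanLin hp
  rw [Matrix.ascent_eq_ascent_toEuclideanLin] at ha
  have hn : finrank ℂ (EuclideanSpace ℂ (Fin n)) = n := finrank_euclideanSpace_fin
  have hjn : j < n := hn ▸ hA.lt_finrank
  rcases hA.le_ascent.eq_or_lt with hjk | hjk
  · omega
  · have hbound := hA.add_max_le_finrank hjk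
    rw [ha, hn] at hbound
    omega

/-- If `A` is an `n`-by-`n` complex matrix with `p(A)` finite, say `p(A) = j` and `a(A) = k`,
then (a) `j = k ≤ n - 1`, (b) `j ≤ k - 1` and `j + k ≤ n - 1`, or (c) `j ≤ k - 2` and
`j + k = n`. -/
theorem pIndex_ascent_trichotomy (n : ℕ) (hn : 0 < n) (A : Matrix (Fin n) (Fin n) ℂ)
    (j k : ℕ) (hp : A.pIndex = (j : ℕ∞)) (ha : A.ascent = k) :
    (j = k ∧ j ≤ n - 1) ∨ (j + 1 ≤ k ∧ j + k ≤ n - 1) ∨ (j + 2 ≤ k ∧ j + k = n) :=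
  pIndex_ascent_trichotomy_general n A j k hp ha
end
end

section
/- Let n be a positive integer and j, k nonnegative integers with j = k ≤ n − 1. Then there exists an n-by-n complex matrix A with p(A) = j and a(A) = k. -/
open Matrix

noncomputable section

/-! For `k ≥ 1` the witness is a weighted shift `A` on `ℂⁿ` whose last two weights `a, c` satisfy
`|a|² + |c|² = 1` and `0 < |c| < 1`. For `i ≤ k`, `A^i` is the sum of a partial permutation
matrix and a rank-one matrix `e_k w_iᵀ` with `w_i` a unit vector, and the two summands have
orthogonal initial and final spaces, so `A^i` is a partial isometry. On the other hand
`A^(k+1) = c • A^k ≠ 0`, so `A^(k+1)` is not a partial isometry and `ker A^(k+1) = ker A^k`, while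
`c^k e_0 - a e_k` lies in `ker A^k` but not in `ker A^(k-1)`; as the kernels of the powers stop
growing once two consecutive ones agree, this gives ascent `k`. For `k = 0` the scalar matrix
`c • 1` works. -/

theorem add_mul_star_mul_add {R : Type*} [NonUnitalRing R] [StarRing R] {x y : R}
    (hx : x * star x * x = x) (hy : y * star y * y = y) (hxy : star x * y = 0)
    (hyx : x * star y = 0) : (x + y) * star (x + y) * (x + y) = x + y := by
  have hyx' : star y * x = 0 := by simpa using congrArg star hxy
  have hxy' : y * star x = 0 := by simpa using congrArg star hyx
  simp only [star_add, add_mul, mul_add]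
  simp only [mul_assoc, hxy, hyx', mul_zero]
  simp only [← mul_assoc, hyx, hxy', zero_mul]
  rw [hx, hy]
  abel

theorem Matrix.vecMulVec_mul_conjTranspose_mul {ι R : Type*} [Fintype ι] [CommRing R] [StarRing R]
    {u v : ι → R} (hu : star u ⬝ᵥ u = 1) (hv : v ⬝ᵥ star v = 1) :
    vecMulVec u v * (vecMulVec u v)ᴴ * vecMulVec u v = vecMulVec u v := by
  rw [conjTranspose_vecMulVec, vecMulVec_mul_vecMulVec, vecMulVec_mul_vecMulVec, hv, one_smul,
    hu, one_smul]

theorem PEquiv.trans_symm_trans {α β : Type*} (f : α ≃. β) : f.trans (f.symm.trans f) = f := by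
  ext1 x
  change ((f x).bind fun b => (f.symm b).bind f) = f x
  rcases h : f x with _ | b
  · rfl
  · rw [Option.bind_some, f.eq_some_iff.2 h, Option.bind_some, h]

theorem PEquiv.conjTranspose_toMatrix {m n R : Type*} [DecidableEq m] [DecidableEq n]
    [NonAssocSemiring R] [StarRing R] (f : m ≃. n) :
    (f.toMatrix : Matrix m n R)ᴴ = f.symm.toMatrix := by
  rw [PEquiv.toMatrix_symm]
  ext i j
  simp only [conjTranspose_apply, transpose_apply, PEquiv.toMatrix_apply]
  split_ifs <;> simp

section
variable {ι R : Type*} [Fintype ι] [DecidableEq ι] [NonAssocSemiring R]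

theorem PEquiv.toMatrix_mul_conjTranspose_mul [StarRing R] (f : ι ≃. ι) :
    (f.toMatrix : Matrix ι ι R) * f.toMatrixᴴ * f.toMatrix = f.toMatrix := by
  rw [conjTranspose_toMatrix, ← toMatrix_trans, ← toMatrix_trans, PEquiv.trans_assoc,
    trans_symm_trans]

theorem PEquiv.toMatrix_mulVec_apply (f : ι ≃. ι) (v : ι → R) (i : ι) :
    (f.toMatrix *ᵥ v) i = (f i).elim 0 v := by
  rcases h : f i with _ | j <;> simp [mulVec, dotProduct, h]

theorem PEquiv.vecMul_toMatrix_apply (f : ι ≃. ι) (v : ι → R) (j : ι) :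
    (v ᵥ* f.toMatrix) j = (f.symm j).elim 0 v := by
  rcases h : f.symm j with _ | i <;> simp [vecMul, dotProduct, ← f.eq_some_iff, h]

end

section
variable {ι : Type*} [Fintype ι] [DecidableEq ι]

theorem Matrix.toEuclideanLin_pow_s2 (A : Matrix ι ι ℂ) (m : ℕ) :
    toEuclideanLin (A ^ m) = toEuclideanLin A ^ m := by
  rw [← coe_toEuclideanCLM_eq_toEuclideanLin, map_pow, ContinuousLinearMap.toLinearMap_pow]
  rfl

theorem Matrix.toLp_mem_ker_toEuclideanLin {M : Matrix ι ι ℂ} {v : ι → ℂ} :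
    WithLp.toLp 2 v ∈ LinearMap.ker (toEuclideanLin M) ↔ M *ᵥ v = 0 := by
  rw [LinearMap.mem_ker, toLpLin_toLp, WithLp.toLp_eq_zero, toLin'_apply]

theorem Matrix.isPartialIsometry_of_mul_conjTranspose_mul {B : Matrix ι ι ℂ}
    (h : B * Bᴴ * B = B) : B.IsPartialIsometry := by
  intro x hx
  rw [← star_eq_conjTranspose] at h
  set T := toEuclideanCLM (𝕜 := ℂ) B
  have hTT : T (T.adjoint (T x)) = T x := by
    simpa only [map_mul, map_star, mul_apply_eq_comp, ContinuousLinearMap.star_eq_adjoint]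
      using congrArg (fun M => toEuclideanCLM (𝕜 := ℂ) M x) h
  have hperp : inner ℂ x (T.adjoint (T x) - x) = 0 := by
    refine Submodule.inner_left_of_mem_orthogonal ?_ hx
    simp [← coe_toEuclideanCLM_eq_toEuclideanLin, T, hTT]
  have : ‖T x‖ ^ 2 = ‖x‖ ^ 2 := by
    rw [← inner_self_eq_norm_sq (𝕜 := ℂ), ← inner_self_eq_norm_sq (𝕜 := ℂ),
      ← ContinuousLinearMap.adjoint_inner_right, ← sub_eq_zero, ← map_sub, ← inner_sub_right,
      hperp, map_zero]
  exact (pow_left_inj₀ (norm_nonneg _) (norm_nonneg _) two_ne_zero).1 this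

theorem Matrix.IsPartialIsometry.norm_eq_one_of_smul {B : Matrix ι ι ℂ} {c : ℂ}
    (hB : B.IsPartialIsometry) (hB0 : B ≠ 0) (hc : c ≠ 0) (hcB : (c • B).IsPartialIsometry) :
    ‖c‖ = 1 := by
  have hker : LinearMap.ker (toEuclideanLin (c • B)) = LinearMap.ker (toEuclideanLin B) := by
    rw [map_smul, LinearMap.ker_smul _ _ hc]
  have hne : (LinearMap.ker (toEuclideanLin B))ᗮ ≠ ⊥ := by
    rw [Ne, Submodule.orthogonal_eq_bot_iff, LinearMap.ker_eq_top, ← map_zero toEuclideanLin]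
    exact toEuclideanLin.injective.ne hB0
  obtain ⟨x, hx, hx0⟩ := Submodule.exists_mem_ne_zero_of_ne_bot hne
  have := hcB x (hker ▸ hx)
  rw [map_smul, LinearMap.smul_apply, norm_smul, hB x hx] at this
  exact (mul_eq_right₀ (norm_ne_zero_iff.2 hx0)).1 this

theorem Matrix.pIndex_eq_of_pow_succ_eq_smul {A : Matrix ι ι ℂ} {k : ℕ} {c : ℂ}
    (hA : ∀ i ≤ k, (A ^ i).IsPartialIsometry) (hAk : A ^ k ≠ 0) (hc : c ≠ 0) (hc1 : ‖c‖ ≠ 1)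
    (h : A ^ (k + 1) = c • A ^ k) : A.pIndex = k := by
  have hk : ¬ (A ^ (k + 1)).IsPartialIsometry := fun hk =>
    hc1 ((hA k le_rfl).norm_eq_one_of_smul hAk hc (h ▸ hk))
  refine le_antisymm (sSup_le ?_) (le_sSup ⟨k, hA, rfl⟩)
  rintro _ ⟨j, hj, rfl⟩
  exact Nat.cast_le.2 (not_lt.1 fun hkj => hk (hj _ hkj))

theorem Matrix.ker_pow_ne_ker_pow_succ_of_le {A : Matrix ι ι ℂ} {m m' : ℕ}
    (h : LinearMap.ker (toEuclideanLin (A ^ m')) ≠ LinearMap.ker (toEuclideanLin (A ^ (m' + 1))))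
    (hm : m ≤ m') :
    LinearMap.ker (toEuclideanLin (A ^ m)) ≠ LinearMap.ker (toEuclideanLin (A ^ (m + 1))) := by
  obtain ⟨j, rfl⟩ := Nat.exists_eq_add_of_le hm
  rw [toEuclideanLin_pow_s2, toEuclideanLin_pow_s2] at h ⊢
  intro heq
  have := Module.End.ker_pow_constant heq
  rw [← this j, add_assoc, ← this (j + 1)] at h
  exact h rfl

theorem Matrix.ascent_eq_of_pow_succ_eq_smul {A : Matrix ι ι ℂ} {k : ℕ} {c : ℂ} (hc : c ≠ 0)
    (h : A ^ (k + 1) = c • A ^ k)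
    (hlt : ∀ m < k,
      LinearMap.ker (toEuclideanLin (A ^ m)) ≠ LinearMap.ker (toEuclideanLin (A ^ (m + 1)))) :
    A.ascent = k := by
  have hk :
      LinearMap.ker (toEuclideanLin (A ^ k)) = LinearMap.ker (toEuclideanLin (A ^ (k + 1))) := by
    rw [h, map_smul, LinearMap.ker_smul _ _ hc]
  exact le_antisymm (Nat.sInf_le hk)
    (le_csInf ⟨k, hk⟩ fun m hm => not_lt.1 fun hmk => hlt m hmk hm)

end

section
variable {n : ℕ}

/-- As a matrix: `e_y ↦ e_(y + i)` for `y + i < K`, and the other basis vectors are killed. -/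
def truncShift (K : Fin n) (i : ℕ) : Fin n ≃. Fin n where
  toFun x := if h : i ≤ x ∧ x < K then some ⟨x - i, by omega⟩ else none
  invFun y := if h : y + i < K then some ⟨y + i, by omega⟩ else none
  inv x y := by
    split_ifs <;> simp [Fin.ext_iff] <;> omega

variable {K : Fin n} {i : ℕ}

theorem truncShift_eq_some {x y : Fin n} :
    truncShift K i x = some y ↔ (x : ℕ) < K ∧ (x : ℕ) = y + i := by
  simp only [truncShift, PEquiv.coe_mk]
  split_ifs <;> simp [Fin.ext_iff] <;> omega

theorem truncShift_symm_eq_some {x y : Fin n} :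
    (truncShift K i).symm y = some x ↔ (x : ℕ) < K ∧ (x : ℕ) = y + i := by
  rw [PEquiv.eq_some_iff, truncShift_eq_some]

theorem truncShift_one_trans :
    (truncShift K 1).trans (truncShift K i) = truncShift K (i + 1) := by
  ext x y
  simp only [PEquiv.trans_eq_some, truncShift_eq_some]
  constructor
  · rintro ⟨z, ⟨hx, hxz⟩, -, hzy⟩
    omega
  · rintro ⟨hx, hxy⟩
    exact ⟨⟨x - 1, by omega⟩, by simp only; omega⟩

theorem truncShift_eq_bot (h : (K : ℕ) ≤ i) : truncShift K i = ⊥ := by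
  ext x y
  simp only [truncShift_eq_some, PEquiv.bot_apply, reduceCtorEq, iff_false]
  omega

theorem toMatrix_truncShift_mulVec_eq_zero {v : Fin n → ℂ}
    (hv : ∀ y : Fin n, (y : ℕ) + i < K → v y = 0) : (truncShift K i).toMatrix *ᵥ v = 0 := by
  funext x
  rw [PEquiv.toMatrix_mulVec_apply]
  rcases h : truncShift K i x with _ | y
  · rfl
  · rw [truncShift_eq_some] at h
    exact hv y (by omega)

theorem conjTranspose_toMatrix_truncShift_mulVec_single :
    (truncShift K i).toMatrixᴴ *ᵥ Pi.single K (1 : ℂ) = 0 := by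
  funext x
  rw [PEquiv.conjTranspose_toMatrix, PEquiv.toMatrix_mulVec_apply]
  rcases h : (truncShift K i).symm x with _ | y
  · rfl
  · rw [truncShift_symm_eq_some] at h
    exact Pi.single_eq_of_ne (fun hyK => by omega) _

end

section
variable {n : ℕ} (K : Fin n) (a c : ℂ)

/-- Row `K` of `weightedShift K a c ^ i`; it is supported on `[K - i, K]`. -/
def tailRow : ℕ → Fin n → ℂ
  | 0 => Pi.single K 1
  | i + 1 => (fun y : Fin n => if (y : ℕ) + i + 1 = K then a else 0) + c • tailRow i

/-- `e_y ↦ e_(y + 1)` for `y + 1 < K`, `e_(K - 1) ↦ a e_K`, `e_K ↦ c e_K`, and `e_y ↦ 0` for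
`y > K`. -/
def weightedShift : Matrix (Fin n) (Fin n) ℂ :=
  (truncShift K 1).toMatrix + vecMulVec (Pi.single K 1) (tailRow K a c 1)

variable {K a c} {i : ℕ}

theorem tailRow_apply_of_lt {y : Fin n} (h : (y : ℕ) + i < K) : tailRow K a c i y = 0 := by
  induction i with
  | zero => exact Pi.single_eq_of_ne (fun hyK => by omega) _
  | succ i ih => simp [tailRow, ih (by omega), show (y : ℕ) + i + 1 ≠ K by omega]

theorem tailRow_apply_self : tailRow K a c i K = c ^ i := by
  induction i with
  | zero => simp [tailRow]
  | succ i ih => simp [tailRow, ih, pow_succ', show (K : ℕ) + i + 1 ≠ K by omega]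

theorem tailRow_succ_apply_of_eq {y : Fin n} (h : (y : ℕ) + i + 1 = K) :
    tailRow K a c (i + 1) y = a := by
  simp [tailRow, h, tailRow_apply_of_lt (show (y : ℕ) + i < K by omega)]

theorem tailRow_dotProduct_star (hac : a * star a + c * star c = 1) (hi : i ≤ K) :
    tailRow K a c i ⬝ᵥ star (tailRow K a c i) = 1 := by
  induction i with
  | zero => simp [tailRow]
  | succ i ih =>
    set d : Fin n → ℂ := fun y => if (y : ℕ) + i + 1 = K then a else 0
    set w := tailRow K a c i
    have hdw : ∀ y, d y * star (w y) = 0 ∧ w y * star (d y) = 0 := by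
      intro y
      by_cases hy : (y : ℕ) + i + 1 = K
      · simp [w, tailRow_apply_of_lt (show (y : ℕ) + i < K by omega)]
      · simp [d, hy]
    have hdd : d ⬝ᵥ star d = a * star a := by
      rw [dotProduct, Fintype.sum_eq_single ⟨K - i - 1, by have := K.isLt; omega⟩]
      · simp [d, show (K : ℕ) - i - 1 + i + 1 = K by omega]
      · intro y hy
        simp [d, Fin.ext_iff] at hy ⊢
        omega
    have hw : w ⬝ᵥ star w = 1 := ih (by omega)
    change (d + c • w) ⬝ᵥ star (d + c • w) = 1
    simp only [star_add, star_smul, add_dotProduct, dotProduct_add, smul_dotProduct,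
      dotProduct_smul, hdd, hw, smul_eq_mul]
    rw [show d ⬝ᵥ star w = 0 from Finset.sum_eq_zero fun y _ => (hdw y).1,
      show w ⬝ᵥ star d = 0 from Finset.sum_eq_zero fun y _ => (hdw y).2]
    linear_combination hac

theorem tailRow_one_vecMul_truncShift :
    tailRow K a c 1 ᵥ* (truncShift K i).toMatrix =
      fun y : Fin n => if (y : ℕ) + i + 1 = K then a else 0 := by
  funext y
  rw [PEquiv.vecMul_toMatrix_apply]
  rcases h : (truncShift K i).symm y with _ | x
  · have hy : ¬ (y : ℕ) + i < K := fun hy => by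
      simpa [h] using (truncShift_symm_eq_some (x := ⟨y + i, hy.trans K.isLt⟩) (y := y)).2 ⟨hy, rfl⟩
    rw [if_neg (by omega)]
    rfl
  · obtain ⟨hx, hxy⟩ := truncShift_symm_eq_some.1 h
    simp [tailRow, hxy, Fin.ext_iff, show (y : ℕ) + i ≠ K by omega]

theorem weightedShift_pow_succ :
    weightedShift K a c ^ (i + 1) =
      (truncShift K (i + 1)).toMatrix + vecMulVec (Pi.single K 1) (tailRow K a c (i + 1)) := by
  induction i with
  | zero => rw [zero_add, pow_one, weightedShift]
  | succ i ih =>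
    rw [pow_succ', ih, weightedShift, add_mul, mul_add, mul_add, ← PEquiv.toMatrix_trans,
      truncShift_one_trans, mul_vecMulVec, toMatrix_truncShift_mulVec_eq_zero, vecMulVec_mul,
      tailRow_one_vecMul_truncShift, vecMulVec_mul_vecMulVec, zero_vecMulVec, add_zero,
      dotProduct_single_one, tailRow_apply_self, pow_one, ← vecMulVec_add]
    · rfl
    · exact fun y hy => Pi.single_eq_of_ne (fun hyK => by omega) _

theorem weightedShift_pow_apply_self : (weightedShift K a c ^ i) K = tailRow K a c i := by
  funext y
  cases i with
  | zero => simp [tailRow, one_apply, Pi.single_apply, eq_comm]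
  | succ i => simp [weightedShift_pow_succ, truncShift_eq_some, vecMulVec_apply]

theorem isPartialIsometry_weightedShift_pow (hac : a * star a + c * star c = 1) (hi : i ≤ K) :
    (weightedShift K a c ^ i).IsPartialIsometry := by
  apply isPartialIsometry_of_mul_conjTranspose_mul
  cases i with
  | zero => simp
  | succ i =>
    rw [weightedShift_pow_succ]
    simpa only [star_eq_conjTranspose] using add_mul_star_mul_add
      (PEquiv.toMatrix_mul_conjTranspose_mul _)
      (vecMulVec_mul_conjTranspose_mul (by simp) (tailRow_dotProduct_star hac hi))
      (by rw [star_eq_conjTranspose, mul_vecMulVec,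
        conjTranspose_toMatrix_truncShift_mulVec_single, zero_vecMulVec])
      (by rw [star_eq_conjTranspose, conjTranspose_vecMulVec, mul_vecMulVec,
        toMatrix_truncShift_mulVec_eq_zero (fun y hy => by simp [tailRow_apply_of_lt hy]),
        zero_vecMulVec])

theorem weightedShift_pow_succ_self (hK : 0 < (K : ℕ)) :
    weightedShift K a c ^ ((K : ℕ) + 1) = c • weightedShift K a c ^ (K : ℕ) := by
  obtain ⟨j, hj⟩ := Nat.exists_eq_add_of_lt hK
  rw [hj, zero_add, weightedShift_pow_succ, weightedShift_pow_succ, truncShift_eq_bot (by omega),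
    truncShift_eq_bot (by omega), PEquiv.toMatrix_bot, zero_add, zero_add, ← vecMulVec_smul]
  congr 1
  funext y
  simp only [tailRow, Pi.add_apply, Pi.smul_apply, smul_eq_mul,
    if_neg (show (y : ℕ) + (j + 1) + 1 ≠ K by omega), zero_add]

theorem ker_weightedShift_pow_ne {j : ℕ} (ha : a ≠ 0) (hc : c ≠ 0) (hK : (K : ℕ) = j + 1) :
    LinearMap.ker (toEuclideanLin (weightedShift K a c ^ j)) ≠
      LinearMap.ker (toEuclideanLin (weightedShift K a c ^ (j + 1))) := by
  set e₀ : Fin n := ⟨0, by omega⟩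
  set v : Fin n → ℂ := c ^ (j + 1) • Pi.single e₀ 1 - a • Pi.single K 1
  have hv : WithLp.toLp 2 v ∈ LinearMap.ker (toEuclideanLin (weightedShift K a c ^ (j + 1))) := by
    rw [toLp_mem_ker_toEuclideanLin, weightedShift_pow_succ, truncShift_eq_bot (by omega),
      PEquiv.toMatrix_bot, zero_add, vecMulVec_mulVec]
    simp [v, tailRow_succ_apply_of_eq (show (e₀ : ℕ) + j + 1 = K by simp [e₀, hK]),
      tailRow_apply_self, mul_comm]
  intro h
  rw [← h, toLp_mem_ker_toEuclideanLin] at hv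
  have := congrFun hv K
  simp [mulVec, weightedShift_pow_apply_self, v, tailRow_apply_of_lt (show (e₀ : ℕ) + j < K by
    simp [e₀, hK]), tailRow_apply_self, ha, hc] at this

theorem weightedShift_pow_ne_zero (hc : c ≠ 0) :
    weightedShift K a c ^ i ≠ 0 := fun h => pow_ne_zero i hc <| by
  rw [← tailRow_apply_self (K := K) (a := a), ← weightedShift_pow_apply_self, h]
  rfl

end

/-- If `j = k ≤ n - 1`, then there is an `n`-by-`n` complex matrix `A` with `p(A) = j`
and `a(A) = k`. -/
theorem exists_matrix_pIndex_eq_ascent (n : ℕ) (hn : 0 < n) (j k : ℕ)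
    (hjk : j = k) (hkn : k ≤ n - 1) :
    ∃ A : Matrix (Fin n) (Fin n) ℂ, A.pIndex = (j : ℕ∞) ∧ A.ascent = k := by
  subst hjk
  have hc : (3 / 5 : ℂ) ≠ 0 := by norm_num
  have hc1 : ‖(3 / 5 : ℂ)‖ ≠ 1 := by norm_num [Complex.norm_div]
  cases j with
  | zero =>
    have : NeZero n := ⟨hn.ne'⟩
    refine ⟨(3 / 5 : ℂ) • 1, pIndex_eq_of_pow_succ_eq_smul ?_ (by simp) hc hc1 (by simp),
      ascent_eq_of_pow_succ_eq_smul hc (by simp) (by simp)⟩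
    intro i hi
    rw [Nat.le_zero.1 hi, pow_zero]
    exact isPartialIsometry_of_mul_conjTranspose_mul (by simp)
  | succ k =>
    set K : Fin n := ⟨k + 1, by omega⟩
    have hK : 0 < (K : ℕ) := k.succ_pos
    have ha : (4 / 5 : ℂ) ≠ 0 := by norm_num
    have hac : (4 / 5 : ℂ) * star (4 / 5) + 3 / 5 * star (3 / 5) = 1 := by norm_num
    refine ⟨weightedShift K (4 / 5) (3 / 5),
      pIndex_eq_of_pow_succ_eq_smul (fun i hi => isPartialIsometry_weightedShift_pow hac hi)
        (weightedShift_pow_ne_zero hc) hc hc1 (weightedShift_pow_succ_self hK),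
      ascent_eq_of_pow_succ_eq_smul hc (weightedShift_pow_succ_self hK) fun m hm =>
        ker_pow_ne_ker_pow_succ_of_le (ker_weightedShift_pow_ne ha hc rfl) (Nat.le_of_lt_succ hm)⟩

end
end

section
/- Let n be a positive integer and j, k nonnegative integers with j ≤ k − 1 and j + k ≤ n − 1. Then there exists an n-by-n complex matrix A with p(A) = j and a(A) = k. -/
open Matrix

noncomputable section

/-!
Take `A = B ⊕ J_k ⊕ 0`, where `B` acts on `e₀, …, e_j` by `e₀ ↦ (e₀ + e₁)/√2` and
`e₁ ↦ e₂ ↦ ⋯ ↦ e_j ↦ 0`. Each row of `A` has at most one nonzero entry, so every Gram matrix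
`(Aⁱ)ᴴ Aⁱ` is diagonal; a matrix with diagonal Gram matrix is a partial isometry iff the diagonal
weights are `0` or `1`, and its kernel is cut out by the nonzero weights. The weight of `e₀` is the
average of the previous weights of `e₀` and `e₁`: it stays `1` while the chain `e₁ ↦ ⋯ ↦ e_j`
still feeds it and is halved afterwards, so `p(A) = j`; the kernels of the powers grow until `J_k`
has died, so `a(A) = k`.
-/

namespace Matrix

theorem conjTranspose_mul_diagonal_mul_eq_diagonal {ι κ : Type*} [DecidableEq ι] [Fintype κ]
    [DecidableEq κ] {A : Matrix κ ι ℂ}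
    (hA : ∀ a b b', A a b ≠ 0 → A a b' ≠ 0 → b = b') (d : κ → ℝ) :
    Aᴴ * (diagonal fun a => (d a : ℂ)) * A =
      diagonal fun b => ((∑ a, ‖A a b‖ ^ 2 * d a : ℝ) : ℂ) := by
  ext b b'
  simp only [mul_apply, conjTranspose_apply, diagonal_apply, mul_ite, mul_zero,
    Finset.sum_ite_eq', Finset.mem_univ, if_true]
  split_ifs with hbb'
  · subst hbb'
    push_cast
    refine Finset.sum_congr rfl fun a _ => ?_
    rw [RCLike.star_def, mul_comm, ← mul_assoc, Complex.mul_conj', mul_comm]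
  · refine Finset.sum_eq_zero fun a _ => ?_
    by_cases hab : A a b = 0
    · simp [hab]
    · simp [not_not.1 (mt (hA a b b' hab) hbb')]

variable {ι : Type*} [Fintype ι] [DecidableEq ι]

theorem conjTranspose_pow_mul_pow_eq_diagonal {A : Matrix ι ι ℂ}
    (hA : ∀ a b b', A a b ≠ 0 → A a b' ≠ 0 → b = b') {w : ℕ → ι → ℝ} (hw₀ : ∀ b, w 0 b = 1)
    (hw : ∀ i b, w (i + 1) b = ∑ a, ‖A a b‖ ^ 2 * w i a) (i : ℕ) :
    (A ^ i)ᴴ * A ^ i = diagonal fun b => (w i b : ℂ) := by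
  induction i with
  | zero => simp [hw₀]
  | succ i ih =>
    rw [pow_succ, conjTranspose_mul, mul_assoc, ← mul_assoc (A ^ i)ᴴ, ih,
      ← mul_assoc, conjTranspose_mul_diagonal_mul_eq_diagonal hA]
    simp only [hw]

theorem norm_toEuclideanLin_sq_of_gram {N : Matrix ι ι ℂ} {d : ι → ℝ}
    (hN : Nᴴ * N = diagonal fun b => (d b : ℂ)) (x : EuclideanSpace ℂ ι) :
    ‖toEuclideanLin N x‖ ^ 2 = ∑ b, d b * ‖x b‖ ^ 2 := by
  have h := inner_self_eq_norm_sq_to_K (𝕜 := ℂ) (toEuclideanLin N x)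
  rw [EuclideanSpace.inner_eq_star_dotProduct, toLpLin_apply, dotProduct_comm, star_mulVec,
    ← dotProduct_mulVec, mulVec_mulVec, hN] at h
  simp only [dotProduct, mulVec_diagonal, Pi.star_apply, RCLike.star_def,
    mul_left_comm _ (d _ : ℂ), Complex.conj_mul'] at h
  rw [toLpLin_apply]
  apply RCLike.ofReal_injective (K := ℂ)
  push_cast
  exact h.symm

theorem norm_toEuclideanLin_single_sq_of_gram {N : Matrix ι ι ℂ} {d : ι → ℝ}
    (hN : Nᴴ * N = diagonal fun b => (d b : ℂ)) (b : ι) :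
    ‖toEuclideanLin N (EuclideanSpace.single b 1)‖ ^ 2 = d b := by
  rw [norm_toEuclideanLin_sq_of_gram hN, Finset.sum_eq_single b (fun b' _ hb' => by simp [hb'])
    (by simp)]
  simp

theorem single_mem_ker_toEuclideanLin_iff_of_gram {N : Matrix ι ι ℂ} {d : ι → ℝ}
    (hN : Nᴴ * N = diagonal fun b => (d b : ℂ)) (b : ι) :
    EuclideanSpace.single b 1 ∈ LinearMap.ker (toEuclideanLin N) ↔ d b = 0 := by
  rw [LinearMap.mem_ker, ← norm_toEuclideanLin_single_sq_of_gram hN]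
  simp

theorem mem_ker_toEuclideanLin_iff_of_gram {N : Matrix ι ι ℂ} {d : ι → ℝ}
    (hN : Nᴴ * N = diagonal fun b => (d b : ℂ)) (x : EuclideanSpace ℂ ι) :
    x ∈ LinearMap.ker (toEuclideanLin N) ↔ ∀ b, d b ≠ 0 → x b = 0 := by
  have hd : ∀ b, 0 ≤ d b := fun b => norm_toEuclideanLin_single_sq_of_gram hN b ▸ sq_nonneg _
  rw [LinearMap.mem_ker, ← norm_eq_zero, ← sq_eq_zero_iff (a := ‖toEuclideanLin N x‖),
    norm_toEuclideanLin_sq_of_gram hN,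
    Finset.sum_eq_zero_iff_of_nonneg fun b _ => mul_nonneg (hd b) (sq_nonneg _)]
  simp only [Finset.mem_univ, true_implies, mul_eq_zero, pow_eq_zero_iff two_ne_zero, norm_eq_zero]
  exact forall_congr' fun b => or_iff_not_imp_left

theorem ker_toEuclideanLin_eq_iff_of_gram {N₁ N₂ : Matrix ι ι ℂ} {d₁ d₂ : ι → ℝ}
    (hN₁ : N₁ᴴ * N₁ = diagonal fun b => (d₁ b : ℂ))
    (hN₂ : N₂ᴴ * N₂ = diagonal fun b => (d₂ b : ℂ)) :
    LinearMap.ker (toEuclideanLin N₁) = LinearMap.ker (toEuclideanLin N₂) ↔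
      ∀ b, d₁ b = 0 ↔ d₂ b = 0 := by
  constructor
  · intro h b
    rw [← single_mem_ker_toEuclideanLin_iff_of_gram hN₁,
      ← single_mem_ker_toEuclideanLin_iff_of_gram hN₂, h]
  · intro h
    ext x
    simp only [mem_ker_toEuclideanLin_iff_of_gram hN₁, mem_ker_toEuclideanLin_iff_of_gram hN₂,
      ne_eq, h]

theorem isPartialIsometry_iff_of_gram {N : Matrix ι ι ℂ} {d : ι → ℝ}
    (hN : Nᴴ * N = diagonal fun b => (d b : ℂ)) :
    N.IsPartialIsometry ↔ ∀ b, d b = 0 ∨ d b = 1 := by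
  constructor
  · intro hN' b
    refine or_iff_not_imp_left.2 fun hb => ?_
    have hperp : EuclideanSpace.single b (1 : ℂ) ∈ (LinearMap.ker (toEuclideanLin N))ᗮ := by
      intro y hy
      rw [EuclideanSpace.inner_single_right, (mem_ker_toEuclideanLin_iff_of_gram hN y).1 hy b hb]
      simp
    rw [← norm_toEuclideanLin_single_sq_of_gram hN, hN' _ hperp]
    simp
  · intro hd x hx
    have hsupp : ∀ b, d b = 0 → x b = 0 := fun b hb => by
      simpa [EuclideanSpace.inner_single_left] using (Submodule.mem_orthogonal _ x).1 hx _
        ((single_mem_ker_toEuclideanLin_iff_of_gram hN b).2 hb)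
    rw [← pow_left_inj₀ (norm_nonneg _) (norm_nonneg _) two_ne_zero,
      norm_toEuclideanLin_sq_of_gram hN, EuclideanSpace.norm_sq_eq]
    refine Finset.sum_congr rfl fun b _ => ?_
    rcases hd b with hb | hb
    · simp [hb, hsupp b hb]
    · simp [hb]

theorem pIndex_eq_of_isPartialIsometry_pow {A : Matrix ι ι ℂ} {j : ℕ}
    (h : ∀ i ≤ j, (A ^ i).IsPartialIsometry) (h' : ¬ (A ^ (j + 1)).IsPartialIsometry) :
    A.pIndex = j := by
  have hset : {i : ℕ | ∀ i' ≤ i, (A ^ i').IsPartialIsometry} = Set.Iic j := by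
    ext i
    refine ⟨fun hi => ?_, fun hi i' hi' => h i' (hi'.trans hi)⟩
    by_contra hij
    exact h' (hi (j + 1) (by simp only [Set.mem_Iic, not_le] at hij; omega))
  rw [pIndex, hset]
  exact IsGreatest.csSup_eq
    ⟨⟨j, Set.mem_Iic.2 le_rfl, rfl⟩, by rintro _ ⟨i, hi, rfl⟩; exact_mod_cast hi⟩

theorem ascent_eq_of_ker_pow {A : Matrix ι ι ℂ} {k : ℕ}
    (h : LinearMap.ker (toEuclideanLin (A ^ k)) = LinearMap.ker (toEuclideanLin (A ^ (k + 1))))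
    (h' : ∀ m < k,
      LinearMap.ker (toEuclideanLin (A ^ m)) ≠ LinearMap.ker (toEuclideanLin (A ^ (m + 1)))) :
    A.ascent = k :=
  le_antisymm (Nat.sInf_le h) (le_csInf ⟨k, h⟩ fun m hm => not_lt.1 fun hmk => h' m hmk hm)

end Matrix

namespace PIndexAscent

-- The witness sends `e₀ ↦ (e₀ + e₁)/√2` (just `e₀/√2` if `j = 0`), `e_b ↦ e_{b+1}` for
-- `0 < b < j` and for `j < b < j + k`, and every other `e_b` to `0`.
def entry (j k a b : ℕ) : ℂ :=
  if a = b + 1 ∧ (b < j ∨ (j < b ∧ b < j + k)) then (if b = 0 then ((√2)⁻¹ : ℝ) else 1)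
  else if a = 0 ∧ b = 0 then ((√2)⁻¹ : ℝ) else 0

-- `weight j k i b = ‖Aⁱ e_b‖²`; at `b = 0` it is `1` for `i ≤ j` by truncated subtraction.
def weight (j k i b : ℕ) : ℝ :=
  if b = 0 then 2⁻¹ ^ (i - j) else if i = 0 ∨ b + i ≤ j ∨ (j < b ∧ b + i ≤ j + k) then 1 else 0

variable {j k : ℕ}

theorem norm_entry_sq (a b : ℕ) :
    ‖entry j k a b‖ ^ 2 =
      if a = b + 1 ∧ (b < j ∨ (j < b ∧ b < j + k)) then (if b = 0 then 2⁻¹ else 1)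
      else if a = 0 ∧ b = 0 then 2⁻¹ else 0 := by
  unfold entry
  split_ifs <;> simp [Complex.norm_real]

theorem weight_zero (b : ℕ) : weight j k 0 b = 1 := by
  simp [weight]

theorem sum_norm_entry_sq_mul {n : ℕ} (hn : j + k < n) (f : ℕ → ℝ) (b : ℕ) :
    ∑ a ∈ Finset.range n, ‖entry j k a b‖ ^ 2 * f a =
      (if b = 0 then 2⁻¹ * f 0 else 0) +
        if b < j ∨ (j < b ∧ b < j + k) then (if b = 0 then 2⁻¹ else 1) * f (b + 1) else 0 := by
  have hterm : ∀ a, ‖entry j k a b‖ ^ 2 * f a =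
      (if a = 0 then (if b = 0 then 2⁻¹ * f 0 else 0) else 0) +
        if a = b + 1 then
          (if b < j ∨ (j < b ∧ b < j + k) then (if b = 0 then 2⁻¹ else 1) * f (b + 1) else 0)
        else 0 := by
    intro a
    rw [norm_entry_sq]
    split_ifs <;> first | omega | simp_all
  rw [Finset.sum_congr rfl fun a _ => hterm a, Finset.sum_add_distrib, Finset.sum_ite_eq',
    Finset.sum_ite_eq']
  simp only [Finset.mem_range, show 0 < n by omega, if_true]
  congr 1
  split_ifs <;> first | rfl | omega

theorem weight_succ {n : ℕ} (hn : j + k < n) (i b : ℕ) :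
    weight j k (i + 1) b = ∑ a ∈ Finset.range n, ‖entry j k a b‖ ^ 2 * weight j k i a := by
  rw [sum_norm_entry_sq_mul hn]
  rcases Nat.eq_zero_or_pos b with rfl | hb
  · rcases lt_or_ge i j with hij | hji
    · simp [weight, Nat.sub_eq_zero_of_le hij.le, Nat.sub_eq_zero_of_le (Nat.succ_le_of_lt hij),
        show 0 < j by omega, show 1 + i ≤ j by omega]
      norm_num
    · simp [weight, show i + 1 - j = i - j + 1 by omega, pow_succ]
      split_ifs <;> first | omega | ring
  · simp only [weight, hb.ne', Nat.add_one_ne_zero, if_false, false_or, zero_add, one_mul]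
    split_ifs <;> first | omega | simp

theorem weight_eq_zero_iff (i b : ℕ) :
    weight j k i b = 0 ↔ b ≠ 0 ∧ i ≠ 0 ∧ j < b + i ∧ (b ≤ j ∨ j + k < b + i) := by
  unfold weight
  split_ifs <;> simp <;> omega

def witness (n j k : ℕ) : Matrix (Fin n) (Fin n) ℂ :=
  of fun a b => entry j k a b

variable {n : ℕ}

theorem eq_of_witness_ne_zero {a b b' : Fin n} (hb : witness n j k a b ≠ 0)
    (hb' : witness n j k a b' ≠ 0) : b = b' := by
  simp only [witness, of_apply, entry] at hb hb'
  apply Fin.ext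
  split_ifs at hb hb' <;> first | omega | simp_all

theorem gram_witness_pow (hn : j + k < n) (i : ℕ) :
    (witness n j k ^ i)ᴴ * witness n j k ^ i = diagonal fun b : Fin n => (weight j k i b : ℂ) := by
  have hs : ∀ (i : ℕ) (b : Fin n), weight j k (i + 1) b =
      ∑ a, ‖witness n j k a b‖ ^ 2 * weight j k i a := fun i b => by
    simp only [weight_succ hn, ← Fin.sum_univ_eq_sum_range, witness, of_apply]
  exact conjTranspose_pow_mul_pow_eq_diagonal (A := witness n j k)
    (fun _ _ _ => eq_of_witness_ne_zero) (w := fun i b => weight j k i b)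
    (fun _ => weight_zero _) hs i

theorem isPartialIsometry_witness_pow_iff (hn : j + k < n) (i : ℕ) :
    (witness n j k ^ i).IsPartialIsometry ↔ i ≤ j := by
  rw [isPartialIsometry_iff_of_gram (gram_witness_pow hn i)]
  constructor
  · intro h
    by_contra hij
    have h0 := h ⟨0, by omega⟩
    simp only [weight, if_true] at h0
    rcases h0 with h0 | h0
    · exact absurd h0 (by positivity)
    · exact (pow_lt_one₀ (by norm_num) (by norm_num) (by omega)).ne h0
  · intro hij b
    unfold weight
    split_ifs <;> simp [Nat.sub_eq_zero_of_le hij]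

theorem ker_witness_pow_eq_iff (hjk : j < k) (hn : j + k < n) (m : ℕ) :
    LinearMap.ker (toEuclideanLin (witness n j k ^ m)) =
        LinearMap.ker (toEuclideanLin (witness n j k ^ (m + 1))) ↔ k ≤ m := by
  rw [ker_toEuclideanLin_eq_iff_of_gram (gram_witness_pow hn m) (gram_witness_pow hn (m + 1))]
  simp only [weight_eq_zero_iff]
  constructor
  · intro h
    by_contra hm
    have := h ⟨j + k - m, by omega⟩
    simp only at this
    omega
  · intro hm b
    omega

theorem pIndex_witness (hn : j + k < n) : (witness n j k).pIndex = j :=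
  pIndex_eq_of_isPartialIsometry_pow (fun i hi => (isPartialIsometry_witness_pow_iff hn i).2 hi)
    (by rw [isPartialIsometry_witness_pow_iff hn]; omega)

theorem ascent_witness (hjk : j < k) (hn : j + k < n) : (witness n j k).ascent = k :=
  ascent_eq_of_ker_pow ((ker_witness_pow_eq_iff hjk hn k).2 le_rfl) fun m hm => by
    rw [ne_eq, ker_witness_pow_eq_iff hjk hn]
    omega

end PIndexAscent

theorem exists_matrix_pIndex_lt_ascent_general (n : ℕ) (j k : ℕ)
    (hjk : j + 1 ≤ k) (hkn : j + k ≤ n - 1) :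
    ∃ A : Matrix (Fin n) (Fin n) ℂ, A.pIndex = (j : ℕ∞) ∧ A.ascent = k := by
  have hn : j + k < n := by omega
  exact ⟨PIndexAscent.witness n j k, PIndexAscent.pIndex_witness hn,
    PIndexAscent.ascent_witness hjk hn⟩

/-- If `j ≤ k - 1` and `j + k ≤ n - 1`, then there is an `n`-by-`n` complex matrix `A` with
`p(A) = j` and `a(A) = k`. -/
theorem exists_matrix_pIndex_lt_ascent (n : ℕ) (hn : 0 < n) (j k : ℕ)
    (hjk : j + 1 ≤ k) (hkn : j + k ≤ n - 1) :
    ∃ A : Matrix (Fin n) (Fin n) ℂ, A.pIndex = (j : ℕ∞) ∧ A.ascent = k :=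
  exists_matrix_pIndex_lt_ascent_general n j k hjk hkn

end
end

section
/- Let n be a positive integer and j, k nonnegative integers with j ≤ k − 2 and j + k = n. Then there exists an n-by-n complex matrix A with p(A) = j and a(A) = k. -/
open Matrix

noncomputable section

/-!
The witness is a nilpotent weighted shift on `ℂ^(j+k)` built from two chains of basis vectors:
a main chain `e₀ → e₁ → ⋯ → e_{k-1} → 0` and a side chain `e_k → ⋯ → e_{k+j-1}` feeding into it,
where `e_j` and `e_{k+j-1}` are both sent to `e_{j+1}/√2` and every other arrow has weight one.
Every column of a power `A^i` has at most one nonzero entry, and such a matrix is a partial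
isometry as soon as, for each nonzero column, the squared weights of the columns with the same
target sum to one. For `i ≤ j` a path of length `i` crossing the junction always meets a
companion path from the other chain, giving `1/2 + 1/2`; for `i = j + 1` the path from `e₀`
crosses alone, so `A^(j+1)` shrinks `e₀ ⊥ ker A^(j+1)` to norm `1/√2`. Finally
`A^k = 0 ≠ A^(k-1)`, and the ascent of a nilpotent matrix is its nilpotency class.
-/

namespace Matrix

variable {ι : Type*} [Fintype ι] [DecidableEq ι]

theorem IsPartialIsometry.of_mul_conjTranspose_mul {A : Matrix ι ι ℂ} (h : A * Aᴴ * A = A) :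
    A.IsPartialIsometry := by
  set T := toEuclideanLin A
  intro x hx
  have hT : T (x - LinearMap.adjoint T (T x)) = 0 := by
    have : toEuclideanLin (A * Aᴴ * A) x = T x := by rw [h]
    rw [toLpLin_mul, toLpLin_mul, toEuclideanLin_conjTranspose_eq_adjoint] at this
    rw [map_sub, sub_eq_zero]
    exact this.symm
  have horth : inner ℂ (x - LinearMap.adjoint T (T x)) x = 0 :=
    (Submodule.mem_orthogonal _ x).mp hx _ hT
  rw [inner_sub_left, sub_eq_zero] at horth
  have hsq : ‖T x‖ ^ 2 = ‖x‖ ^ 2 := by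
    rw [← inner_self_eq_norm_sq (𝕜 := ℂ), ← inner_self_eq_norm_sq (𝕜 := ℂ) x,
      ← LinearMap.adjoint_inner_left, horth]
  exact (pow_left_inj₀ (norm_nonneg _) (norm_nonneg _) two_ne_zero).mp hsq

theorem ascent_eq_nilpotencyClass {A : Matrix ι ι ℂ} (hA : IsNilpotent A) :
    A.ascent = nilpotencyClass A := by
  obtain ⟨c, hc⟩ := hA
  have ker_eq_top {m : ℕ} : LinearMap.ker (toEuclideanLin (A ^ m)) = ⊤ ↔ A ^ m = 0 := by
    rw [LinearMap.ker_eq_top, LinearEquiv.map_eq_zero_iff]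
  unfold ascent nilpotencyClass
  congr 1
  ext m
  simp only [Set.mem_ofPred_eq]
  constructor
  · intro hm
    rw [toLpLin_pow, toLpLin_pow] at hm
    rw [← ker_eq_top, toLpLin_pow, Module.End.ker_pow_constant hm c, ← toLpLin_pow, ker_eq_top,
      pow_add, hc, mul_zero]
  · intro hm
    rw [ker_eq_top.mpr hm, ker_eq_top.mpr (by rw [pow_succ, hm, zero_mul])]

end Matrix

/-- The matrix of `e t ↦ w t • e (f t)`; a column whose target `f t` is not in `Fin n` is zero. -/
def weightedMapMatrix (n : ℕ) (f : ℕ → ℕ) (w : ℕ → ℂ) : Matrix (Fin n) (Fin n) ℂ :=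
  Matrix.of fun r t => if (r : ℕ) = f t then w t else 0

namespace weightedMapMatrix

variable {n : ℕ} {f g h : ℕ → ℕ} {w v u : ℕ → ℂ}

theorem mul_eq (hu : ∀ t < n, w (g t) * v t = u t)
    (hh : ∀ t < n, v t ≠ 0 → g t < n ∧ f (g t) = h t) :
    weightedMapMatrix n f w * weightedMapMatrix n g v = weightedMapMatrix n h u := by
  ext r t
  simp only [weightedMapMatrix, mul_apply, of_apply, mul_ite, mul_zero]
  by_cases hv : v t = 0
  · have : u t = 0 := by rw [← hu t t.isLt, hv, mul_zero]
    simp [hv, this]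
  obtain ⟨hgt, hfg⟩ := hh t t.isLt hv
  rw [Finset.sum_eq_single ⟨g t, hgt⟩ (fun q _ hq => if_neg (fun e => hq (Fin.ext e)))
    (by simp), if_pos rfl, ← hu t t.isLt, ← hfg]
  split_ifs <;> simp

theorem mul_conjTranspose_self :
    weightedMapMatrix n f w * (weightedMapMatrix n f w)ᴴ =
      diagonal fun r : Fin n =>
        ((∑ p ∈ Finset.univ.filter (fun p : Fin n => f p = r), ‖w p‖ ^ 2 : ℝ) : ℂ) := by
  ext r s
  simp only [weightedMapMatrix, mul_apply, conjTranspose_apply, of_apply, diagonal_apply]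
  split_ifs with hrs
  · subst hrs
    push_cast
    rw [Finset.sum_filter]
    refine Finset.sum_congr rfl fun p _ => ?_
    by_cases h : (r : ℕ) = f p
    · simp [h, Complex.mul_conj, Complex.normSq_eq_norm_sq]
    · simp [h, Ne.symm h]
  · refine Finset.sum_eq_zero fun p _ => ?_
    split_ifs <;> simp_all [Fin.ext_iff]

theorem mul_conjTranspose_mul_eq_self
    (h : ∀ t < n, w t ≠ 0 →
      ∑ q ∈ Finset.univ.filter (fun q : Fin n => f q = f t), ‖w q‖ ^ 2 = 1) :
    weightedMapMatrix n f w * (weightedMapMatrix n f w)ᴴ * weightedMapMatrix n f w =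
      weightedMapMatrix n f w := by
  ext r t
  rw [mul_conjTranspose_self, diagonal_mul]
  simp only [weightedMapMatrix, of_apply]
  split_ifs with hr
  · by_cases hw : w t = 0
    · simp [hw]
    · rw [hr, h t t.isLt hw]
      simp
  · simp

theorem not_isPartialIsometry {t₀ : Fin n} (ht₀ : f t₀ < n)
    (hfib : ∀ q : Fin n, f q = f t₀ → q = t₀) (hw₀ : w t₀ ≠ 0) (hw₁ : ‖w t₀‖ ≠ 1) :
    ¬ (weightedMapMatrix n f w).IsPartialIsometry := by
  set A := weightedMapMatrix n f w
  have apply_single : toEuclideanLin A (EuclideanSpace.single t₀ 1) =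
      EuclideanSpace.single ⟨f t₀, ht₀⟩ (w t₀) := by
    ext r
    simp only [A, weightedMapMatrix, ofLp_toLpLin, PiLp.ofLp_single, toLin'_apply, mulVec,
      dotProduct, of_apply, Pi.single_apply, mul_ite, mul_one, mul_zero, Finset.sum_ite_eq',
      Finset.mem_univ, if_true, PiLp.single_apply]
    simp [Fin.ext_iff]
  have single_mem : EuclideanSpace.single t₀ (1 : ℂ) ∈ (LinearMap.ker (toEuclideanLin A))ᗮ := by
    rw [Submodule.mem_orthogonal]
    intro x hx
    have hrow := congrArg (fun y : EuclideanSpace ℂ (Fin n) => y ⟨f t₀, ht₀⟩)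
      (LinearMap.mem_ker.mp hx)
    simp only [A, weightedMapMatrix, toLpLin_apply, mulVec, dotProduct, of_apply,
      ite_mul, zero_mul] at hrow
    rw [Finset.sum_eq_single t₀ (fun q _ hq => if_neg fun e => hq (hfib q e.symm)) (by simp),
      if_pos rfl] at hrow
    have hx₀ : x t₀ = 0 := (mul_eq_zero.mp hrow).resolve_left hw₀
    simp [EuclideanSpace.inner_single_right, hx₀]
  intro hA
  have := hA _ single_mem
  rw [apply_single, PiLp.norm_single, PiLp.norm_single, norm_one] at this
  exact hw₁ this

end weightedMapMatrix

/- With `e (k + s)` put at level `s + 1`, the power `A ^ i` moves every basis vector `i` levels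
up, kills it on reaching level `k`, and multiplies it by `1/√2` when it passes from level `j` to
level `j + 1`. -/
def mergeLevel (k t : ℕ) : ℕ := if t < k then t else t - k + 1

def mergePos (j k i t : ℕ) : ℕ :=
  if mergeLevel k t + i ≤ j then t + i else mergeLevel k t + i

def mergeWeight (j k i t : ℕ) : ℂ :=
  if k ≤ mergeLevel k t + i then 0
  else if mergeLevel k t ≤ j ∧ j < mergeLevel k t + i then ((√2)⁻¹ : ℝ) else 1

def mergeMatrix (j k i : ℕ) : Matrix (Fin (j + k)) (Fin (j + k)) ℂ :=
  weightedMapMatrix (j + k) (mergePos j k i) (mergeWeight j k i)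

section mergeMatrix

variable {j k i : ℕ}

theorem mergeWeight_ne_zero_iff {t : ℕ} : mergeWeight j k i t ≠ 0 ↔ mergeLevel k t + i < k := by
  unfold mergeWeight
  split_ifs <;> simp_all

theorem mergeMatrix_zero (hjk : j < k) : mergeMatrix j k 0 = 1 := by
  ext r t
  simp only [mergeMatrix, weightedMapMatrix, mergePos, mergeWeight, mergeLevel, of_apply,
    one_apply, Fin.ext_iff]
  have := t.isLt
  split_ifs <;> first | rfl | omega

theorem mergeMatrix_one_mul (i : ℕ) :
    mergeMatrix j k 1 * mergeMatrix j k i = mergeMatrix j k (i + 1) := by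
  refine weightedMapMatrix.mul_eq (fun t ht => ?_) (fun t ht hw => ?_)
  · simp only [mergePos, mergeWeight, mergeLevel]
    split_ifs <;> first | omega | simp
  · rw [mergeWeight_ne_zero_iff] at hw
    simp only [mergePos, mergeLevel] at hw ⊢
    split_ifs at hw ⊢ <;> omega

theorem mergeMatrix_one_pow (hjk : j < k) (i : ℕ) :
    mergeMatrix j k 1 ^ i = mergeMatrix j k i := by
  induction i with
  | zero => rw [pow_zero, mergeMatrix_zero hjk]
  | succ i ih => rw [pow_succ', ih, mergeMatrix_one_mul]

theorem norm_inv_sqrt_two_sq : ‖(((√2)⁻¹ : ℝ) : ℂ)‖ ^ 2 = 1 / 2 := by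
  rw [Complex.norm_real, Real.norm_eq_abs, sq_abs, inv_pow, Real.sq_sqrt zero_le_two, one_div]

theorem sum_norm_sq_mergeWeight_fiber (hij : i ≤ j) {t : ℕ} (ht : t < j + k)
    (hw : mergeWeight j k i t ≠ 0) :
    ∑ q ∈ Finset.univ.filter (fun q : Fin (j + k) => mergePos j k i q = mergePos j k i t),
      ‖mergeWeight j k i q‖ ^ 2 = 1 := by
  rw [mergeWeight_ne_zero_iff] at hw
  have fiber_alive {q : Fin (j + k)} (hq : mergePos j k i q = mergePos j k i t)
      (hwq : mergeWeight j k i q ≠ 0) : (q : ℕ) = t ∨ (mergeLevel k t ≤ j ∧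
        j < mergeLevel k t + i ∧ (q : ℕ) = if t < k then t + k - 1 else t - k + 1) := by
    rw [mergeWeight_ne_zero_iff] at hwq
    have := q.isLt
    simp only [mergePos, mergeLevel] at hq hwq hw ⊢
    split_ifs at hq hwq hw ⊢ <;> omega
  by_cases hcross : mergeLevel k t ≤ j ∧ j < mergeLevel k t + i
  · -- `t'` is the vector at the same level as `t` on the other chain
    set t' := if t < k then t + k - 1 else t - k + 1 with ht'_def
    have hcc : mergeWeight j k i t = (((√2)⁻¹ : ℝ) : ℂ) := by
      simp only [mergeWeight, if_neg (not_le.mpr hw), if_pos hcross]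
    have hlev : mergeLevel k t' = mergeLevel k t := by
      simp only [ht'_def, mergeLevel] at hw hcross ⊢
      split_ifs at hw hcross ⊢ <;> omega
    have ht' : t' < j + k := by
      simp only [ht'_def, mergeLevel] at hcross ⊢
      split_ifs at hcross ⊢ <;> omega
    have hne : (⟨t, ht⟩ : Fin (j + k)) ≠ ⟨t', ht'⟩ := by
      simp only [ne_eq, Fin.mk.injEq, ht'_def]
      simp only [mergeLevel] at hw hcross
      split_ifs at hw hcross ⊢ <;> omega
    have hpos : mergePos j k i t' = mergePos j k i t := by
      simp only [mergePos, hlev, if_neg (not_le.mpr hcross.2)]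
    rw [← Finset.sum_subset (s₁ := {⟨t, ht⟩, ⟨t', ht'⟩}) ?_ ?_, Finset.sum_pair hne]
    · simp only [mergeWeight, hlev] at hcc ⊢
      rw [hcc, norm_inv_sqrt_two_sq]
      norm_num
    · intro q hq
      simp only [Finset.mem_insert, Finset.mem_singleton] at hq
      rcases hq with rfl | rfl <;> simp [hpos]
    · intro q hq hqt
      by_contra hwq
      simp only [Finset.mem_insert, Finset.mem_singleton, not_or, ← Fin.val_ne_iff] at hqt
      rcases fiber_alive (Finset.mem_filter.mp hq).2 (by simpa using hwq) with h | h
      · exact hqt.1 h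
      · exact hqt.2 h.2.2
  · have hw1 : mergeWeight j k i t = 1 := by
      simp only [mergeWeight, if_neg (not_le.mpr hw), if_neg hcross]
    rw [Finset.sum_eq_single_of_mem ⟨t, ht⟩ (by simp) fun q hq hqt => ?_, hw1, norm_one, one_pow]
    by_contra hwq
    rcases fiber_alive (Finset.mem_filter.mp hq).2 (by simpa using hwq) with h | h
    · exact hqt (Fin.ext h)
    · exact hcross ⟨h.1, h.2.1⟩

theorem mergeWeight_apply_zero (hji : j < i) (hik : i < k) :
    mergeWeight j k i 0 = (((√2)⁻¹ : ℝ) : ℂ) := by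
  simp [mergeWeight, mergeLevel, show 0 < k by omega, hji, hik.not_ge]

theorem mergeWeight_apply_zero_ne_zero (hji : j < i) (hik : i < k) : mergeWeight j k i 0 ≠ 0 := by
  simp [mergeWeight_apply_zero hji hik]

theorem isPartialIsometry_mergeMatrix (hij : i ≤ j) : (mergeMatrix j k i).IsPartialIsometry :=
  IsPartialIsometry.of_mul_conjTranspose_mul <| weightedMapMatrix.mul_conjTranspose_mul_eq_self
    fun _ ht hw => sum_norm_sq_mergeWeight_fiber hij ht hw

theorem not_isPartialIsometry_mergeMatrix (hjk : j + 2 ≤ k) :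
    ¬ (mergeMatrix j k (j + 1)).IsPartialIsometry := by
  refine weightedMapMatrix.not_isPartialIsometry (t₀ := ⟨0, by omega⟩) ?_ (fun q hq => ?_) ?_ ?_
  · simp only [mergePos, mergeLevel]
    split_ifs <;> omega
  · have := q.isLt
    simp only [mergePos, mergeLevel, Fin.ext_iff] at hq ⊢
    split_ifs at hq <;> omega
  · exact mergeWeight_apply_zero_ne_zero (Nat.lt_succ_self j) (by omega)
  · intro h
    have := norm_inv_sqrt_two_sq
    rw [← mergeWeight_apply_zero (Nat.lt_succ_self j) (by omega : j + 1 < k), h] at this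
    norm_num at this

theorem mergeMatrix_eq_zero (hki : k ≤ i) : mergeMatrix j k i = 0 := by
  ext r t
  simp [mergeMatrix, weightedMapMatrix, mergeWeight, show k ≤ mergeLevel k t + i by omega]

theorem mergeMatrix_sub_one_ne_zero (hjk : j + 2 ≤ k) : mergeMatrix j k (k - 1) ≠ 0 := by
  intro h
  have := congrFun (congrFun h ⟨k - 1, by omega⟩) ⟨0, by omega⟩
  simp only [mergeMatrix, weightedMapMatrix, of_apply, Matrix.zero_apply] at this
  rw [if_pos (by simp only [mergePos, mergeLevel]; split_ifs <;> omega)] at this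
  exact mergeWeight_apply_zero_ne_zero (by omega) (by omega) this

end mergeMatrix

theorem exists_matrix_pIndex_add_ascent_eq_general (n : ℕ) (j k : ℕ)
    (hjk : j + 2 ≤ k) (hkn : j + k = n) :
    ∃ A : Matrix (Fin n) (Fin n) ℂ, A.pIndex = (j : ℕ∞) ∧ A.ascent = k := by
  subst hkn
  have hpow := mergeMatrix_one_pow (j := j) (k := k) (by omega)
  refine ⟨mergeMatrix j k 1, ?_, ?_⟩
  · refine pIndex_eq_of_isPartialIsometry_pow (fun i hi => ?_) ?_
    · rw [hpow]
      exact isPartialIsometry_mergeMatrix hi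
    · rw [hpow]
      exact not_isPartialIsometry_mergeMatrix hjk
  · rw [ascent_eq_nilpotencyClass ⟨k, by rw [hpow, mergeMatrix_eq_zero le_rfl]⟩]
    obtain ⟨k', rfl⟩ : ∃ k', k = k' + 1 := ⟨k - 1, by omega⟩
    rw [nilpotencyClass_eq_succ_iff, hpow, hpow]
    exact ⟨mergeMatrix_eq_zero le_rfl, mergeMatrix_sub_one_ne_zero hjk⟩

/-- If `j ≤ k - 2` and `j + k = n`, then there is an `n`-by-`n` complex matrix `A` with
`p(A) = j` and `a(A) = k`. -/
theorem exists_matrix_pIndex_add_ascent_eq (n : ℕ) (hn : 0 < n) (j k : ℕ)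
    (hjk : j + 2 ≤ k) (hkn : j + k = n) :
    ∃ A : Matrix (Fin n) (Fin n) ℂ, A.pIndex = (j : ℕ∞) ∧ A.ascent = k :=
  exists_matrix_pIndex_add_ascent_eq_general n j k hjk hkn

end
end

section
/- Let A be an n-by-n complex matrix which is unitarily similar to the upper-triangular block matrix A′ with blocks A₁, …, A_{j−1} on the superdiagonal positions, then B and C, acting on ℂⁿ = ℂ^{n₁} ⊕ ⋯ ⊕ ℂ^{n_j} ⊕ ℂ^m (A′ has zero diagonal blocks in the first j positions, A_ℓ is the (ℓ, ℓ+1) block for 1 ≤ ℓ ≤ j−1, B is the (j, j+1) block, C is the (j+1, j+1) block, and all other blocks are zero), where A_ℓ*A_ℓ = I_{n_{ℓ+1}} for 1 ≤ ℓ ≤ j − 1 and B*B + C*C = I_m, and where 1 ≤ j ≤ a(A). Then p(A) = j + p(C). -/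
open Matrix

noncomputable section

/-!
Write `A' = [[P, Q], [0, C]]`, where `P` is the block-superdiagonal part on
`ℂ^{n₁} ⊕ ⋯ ⊕ ℂ^{n_j}` and `Q` is `B` placed in the last of these blocks. Since `P` maps each block
`ℓ + 1` isometrically into block `ℓ` and has no entries in the last block row, `P*Q = 0`; together
with `B*B + C*C = I`, induction on `i` gives
`(A'^i)* A'^i = E_i ⊕ (C^(i-j))* C^(i-j)`, where `E_i` is the projection onto the blocks numbered
`i, i + 1, …` (from `0`) and `i - j` is truncated at `0`. As `M` is a partial isometry exactly when
`M*M` is idempotent, `A'^i` is a partial isometry iff `C^(i-j)` is, whence `p(A') = j + p(C)`;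
unitary similarity preserves `p`.
-/

section PartialIsometry

variable {𝕜 E F : Type*} [RCLike 𝕜] [NormedAddCommGroup E] [InnerProductSpace 𝕜 E]
  [NormedAddCommGroup F] [InnerProductSpace 𝕜 F] [FiniteDimensional 𝕜 E] [FiniteDimensional 𝕜 F]

open LinearMap in
theorem LinearMap.norm_map_eq_on_orthogonal_ker_iff (f : E →ₗ[𝕜] F) :
    (∀ x ∈ (ker f)ᗮ, ‖f x‖ = ‖x‖) ↔ IsIdempotentElem (f.adjoint ∘ₗ f) := by
  have hrange (x : E) : f.adjoint (f x) ∈ (ker f)ᗮ := f.orthogonal_ker ▸ mem_range_self _ _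
  constructor
  · intro h
    let φ : (ker f)ᗮ →ₗᵢ[𝕜] F := ⟨f ∘ₗ (ker f)ᗮ.subtype, fun x => h x x.2⟩
    have hfix : ∀ x ∈ (ker f)ᗮ, f.adjoint (f x) = x := by
      intro x hx
      refine ext_inner_right 𝕜 fun y => ?_
      obtain ⟨y₀, hy₀, y₁, hy₁, rfl⟩ := (ker f).exists_add_mem_mem_orthogonal y
      have hφ : inner 𝕜 (f x) (f y₁) = inner 𝕜 x y₁ := φ.inner_map_map ⟨x, hx⟩ ⟨y₁, hy₁⟩
      rw [adjoint_inner_left, map_add, mem_ker.mp hy₀, zero_add, hφ, inner_add_right,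
        Submodule.inner_left_of_mem_orthogonal hy₀ hx, zero_add]
    ext x
    exact hfix _ (hrange x)
  · intro h x hx
    have hfix : f.adjoint (f x) = x := by
      set v := f.adjoint (f x) - x
      have hv : f.adjoint (f v) = 0 := by
        simpa [v, sub_eq_zero] using LinearMap.congr_fun h x
      have hv_ker : v ∈ ker f := by
        rw [mem_ker, ← inner_self_eq_zero (𝕜 := 𝕜), ← adjoint_inner_left, hv, inner_zero_left]
      have hv_orth : v ∈ (ker f)ᗮ := sub_mem (hrange x) hx
      exact sub_eq_zero.mp (Submodule.disjoint_def.mp (ker f).orthogonal_disjoint v hv_ker hv_orth)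
    have hsq : ‖f x‖ ^ 2 = ‖x‖ ^ 2 := by
      rw [← inner_self_eq_norm_sq (𝕜 := 𝕜), ← inner_self_eq_norm_sq (𝕜 := 𝕜),
        ← adjoint_inner_left, hfix]
    exact (sq_eq_sq₀ (norm_nonneg _) (norm_nonneg _)).mp hsq

end PartialIsometry

theorem ENat.sSup_image_natCast_setOf_forall_le_sub {P : ℕ → Prop} (h0 : P 0) (j : ℕ) :
    sSup (((↑) : ℕ → ℕ∞) '' {n | ∀ i ≤ n, P (i - j)}) =
      j + sSup (((↑) : ℕ → ℕ∞) '' {n | ∀ i ≤ n, P i}) := by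
  apply le_antisymm
  · refine sSup_le ?_
    rintro _ ⟨n, hn, rfl⟩
    have hmem : n - j ∈ {n | ∀ i ≤ n, P i} := by
      intro i hi
      rcases Nat.eq_zero_or_pos i with rfl | hi₀
      · exact h0
      · simpa using hn (i + j) (by omega)
    calc (n : ℕ∞) ≤ j + (n - j : ℕ) := by norm_cast; omega
      _ ≤ _ := add_le_add_right (le_sSup (Set.mem_image_of_mem _ hmem)) _
  · have hne : (((↑) : ℕ → ℕ∞) '' {n | ∀ i ≤ n, P i}).Nonempty :=
      ⟨0, 0, fun i hi => by rwa [Nat.le_zero.mp hi], rfl⟩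
    rw [ENat.add_sSup hne]
    refine iSup₂_le ?_
    rintro _ ⟨n, hn, rfl⟩
    exact le_sSup ⟨j + n, fun i hi => hn _ (by omega), by norm_cast⟩

namespace Matrix

section UnitaryConj

variable {R ι κ : Type*} [Semiring R] [Star R] [Fintype ι] [Fintype κ] [DecidableEq ι]
  {U : Matrix ι κ R}

theorem conj_mul_conj (hU : U * Uᴴ = 1) (X Y : Matrix ι ι R) :
    Uᴴ * X * U * (Uᴴ * Y * U) = Uᴴ * (X * Y) * U := by
  simp only [Matrix.mul_assoc]
  rw [← Matrix.mul_assoc U, hU, Matrix.one_mul]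

theorem conj_pow [DecidableEq κ] (hU₁ : Uᴴ * U = 1) (hU₂ : U * Uᴴ = 1)
    (X : Matrix ι ι R) (i : ℕ) : (Uᴴ * X * U) ^ i = Uᴴ * X ^ i * U := by
  induction i with
  | zero => simp [hU₁]
  | succ i ih => rw [pow_succ, ih, conj_mul_conj hU₂, ← pow_succ]

theorem conj_injective (hU : U * Uᴴ = 1) :
    Function.Injective fun X : Matrix ι ι R => Uᴴ * X * U := fun X Y h => by
  simpa [← Matrix.mul_assoc, hU, Matrix.mul_assoc _ U, Matrix.mul_assoc _ Uᴴ] using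
    congrArg (fun Z => U * Z * Uᴴ) h

end UnitaryConj

section PIndex

variable {ι κ : Type*} [Fintype ι] [Fintype κ] [DecidableEq ι] [DecidableEq κ]

theorem isPartialIsometry_iff_isIdempotentElem (A : Matrix ι ι ℂ) :
    A.IsPartialIsometry ↔ IsIdempotentElem (Aᴴ * A) := by
  rw [IsPartialIsometry, LinearMap.norm_map_eq_on_orthogonal_ker_iff,
    ← toEuclideanLin_conjTranspose_eq_adjoint, ← toLpLin_mul_same, IsIdempotentElem,
    IsIdempotentElem, Module.End.mul_eq_comp, ← toLpLin_mul_same]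
  exact toEuclideanLin.injective.eq_iff

theorem isPartialIsometry_one : (1 : Matrix ι ι ℂ).IsPartialIsometry := by
  simp [isPartialIsometry_iff_isIdempotentElem, IsIdempotentElem.one]

theorem pIndex_eq_add_of_isPartialIsometry_pow_iff (A : Matrix ι ι ℂ) (C : Matrix κ κ ℂ) (j : ℕ)
    (h : ∀ i, (A ^ i).IsPartialIsometry ↔ (C ^ (i - j)).IsPartialIsometry) :
    A.pIndex = j + C.pIndex := by
  simp only [pIndex, h]
  exact ENat.sSup_image_natCast_setOf_forall_le_sub (P := fun i => (C ^ i).IsPartialIsometry)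
    (by rw [pow_zero]; exact isPartialIsometry_one) j

theorem isPartialIsometry_conj_iff {U : Matrix ι κ ℂ} (hU : U * Uᴴ = 1) (X : Matrix ι ι ℂ) :
    (Uᴴ * X * U).IsPartialIsometry ↔ X.IsPartialIsometry := by
  have hstar : (Uᴴ * X * U)ᴴ = Uᴴ * Xᴴ * U := by
    simp only [conjTranspose_mul, conjTranspose_conjTranspose, Matrix.mul_assoc]
  rw [isPartialIsometry_iff_isIdempotentElem, isPartialIsometry_iff_isIdempotentElem, hstar,
    conj_mul_conj hU, IsIdempotentElem, IsIdempotentElem, conj_mul_conj hU,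
    (conj_injective hU).eq_iff]

theorem pIndex_conj {U : Matrix ι κ ℂ} (hU₁ : Uᴴ * U = 1) (hU₂ : U * Uᴴ = 1)
    (A : Matrix ι ι ℂ) : (Uᴴ * A * U).pIndex = A.pIndex := by
  simpa using pIndex_eq_add_of_isPartialIsometry_pow_iff (Uᴴ * A * U) A 0 fun i => by
    rw [conj_pow hU₁ hU₂, isPartialIsometry_conj_iff hU₂, Nat.sub_zero]

end PIndex

theorem isIdempotentElem_fromBlocks_zero_zero_iff {α m n : Type*} [Fintype m] [Fintype n]
    [Semiring α] (A : Matrix m m α) (D : Matrix n n α) :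
    IsIdempotentElem (fromBlocks A 0 0 D) ↔ IsIdempotentElem A ∧ IsIdempotentElem D := by
  simp [IsIdempotentElem, fromBlocks_multiply, fromBlocks_inj]

section Graded

variable {X Y : Type*} [DecidableEq X] (deg : X → ℕ)

def degreeGeProj (i : ℕ) : Matrix X X ℂ :=
  diagonal fun p => if i ≤ deg p then 1 else 0

theorem degreeGeProj_zero : degreeGeProj deg 0 = 1 := by
  simp [degreeGeProj]

theorem degreeGeProj_mul_degreeGeProj [Fintype X] (i k : ℕ) :
    degreeGeProj deg i * degreeGeProj deg k = degreeGeProj deg (max i k) := by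
  simp only [degreeGeProj, diagonal_mul_diagonal, max_le_iff, ite_zero_mul_ite_zero, one_mul]

theorem isIdempotentElem_degreeGeProj [Fintype X] (i : ℕ) :
    IsIdempotentElem (degreeGeProj deg i) := by
  rw [IsIdempotentElem, degreeGeProj_mul_degreeGeProj, max_self]

theorem conjTranspose_degreeGeProj (i : ℕ) : (degreeGeProj deg i)ᴴ = degreeGeProj deg i := by
  simp [degreeGeProj, diagonal_conjTranspose, apply_ite]

variable {deg} [Fintype X]

theorem degreeGeProj_mul_of_raises {P : Matrix X X ℂ}
    (hP : ∀ p q, P p q ≠ 0 → deg q = deg p + 1) (i : ℕ) :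
    degreeGeProj deg i * P = P * degreeGeProj deg (i + 1) := by
  ext p q
  by_cases hpq : P p q = 0
  · simp [degreeGeProj, hpq]
  · simp [degreeGeProj, hP p q hpq]

theorem degreeGeProj_mul_of_top {Q : Matrix X Y ℂ} {j : ℕ}
    (hQ : ∀ p b, Q p b ≠ 0 → deg p + 1 = j) (i : ℕ) :
    degreeGeProj deg i * Q = if i < j then Q else 0 := by
  ext p b
  by_cases hpb : Q p b = 0
  · split_ifs <;> simp [degreeGeProj, hpb]
  · have := hQ p b hpb
    split_ifs <;> simp [degreeGeProj] <;> omega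

variable [Fintype Y] [DecidableEq Y] {P : Matrix X X ℂ} {Q : Matrix X Y ℂ} {C : Matrix Y Y ℂ}
  {j : ℕ}

theorem conjTranspose_mul_self_fromBlocks_pow (hdeg : ∀ p, deg p < j)
    (hP : ∀ p q, P p q ≠ 0 → deg q = deg p + 1) (hPP : Pᴴ * P = degreeGeProj deg 1)
    (hQ : ∀ p b, Q p b ≠ 0 → deg p + 1 = j) (hQC : Qᴴ * Q + Cᴴ * C = 1) (i : ℕ) :
    (fromBlocks P Q 0 C ^ i)ᴴ * fromBlocks P Q 0 C ^ i =
      fromBlocks (degreeGeProj deg i) 0 0 ((C ^ (i - j))ᴴ * C ^ (i - j)) := by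
  have hPQ : Pᴴ * Q = 0 := by
    ext q b
    refine Finset.sum_eq_zero fun p _ => ?_
    by_cases hpb : Q p b = 0
    · simp [hpb]
    · have hpq : P p q = 0 := by
        by_contra hpq
        have := hdeg q
        have := hP p q hpq
        have := hQ p b hpb
        omega
      simp [hpq]
  induction i with
  | zero => simp [degreeGeProj_zero, fromBlocks_one]
  | succ i ih =>
    have hDQ := degreeGeProj_mul_of_top hQ i
    have h₁₁ : Pᴴ * (degreeGeProj deg i * P) = degreeGeProj deg (i + 1) := by
      rw [degreeGeProj_mul_of_raises hP, ← Matrix.mul_assoc, hPP, degreeGeProj_mul_degreeGeProj,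
        max_eq_right (by omega)]
    have h₁₂ : Pᴴ * (degreeGeProj deg i * Q) = 0 := by
      rw [hDQ]; split_ifs <;> simp [hPQ]
    have h₂₁ : Qᴴ * (degreeGeProj deg i * P) = 0 := by
      simpa [conjTranspose_degreeGeProj, Matrix.mul_assoc] using congrArg conjTranspose h₁₂
    have h₂₂ : Qᴴ * (degreeGeProj deg i * Q) + Cᴴ * ((C ^ (i - j))ᴴ * (C ^ (i - j) * C)) =
        (C ^ (i + 1 - j))ᴴ * C ^ (i + 1 - j) := by
      rw [hDQ]
      split_ifs with hij
      · simpa [Nat.sub_eq_zero_of_le hij.le, Nat.sub_eq_zero_of_le hij] using hQC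
      · rw [Nat.sub_add_comm (not_lt.mp hij), pow_succ, conjTranspose_mul]
        simp [Matrix.mul_assoc]
    rw [pow_succ, conjTranspose_mul, Matrix.mul_assoc, ← Matrix.mul_assoc (fromBlocks P Q 0 C ^ i)ᴴ,
      ih, fromBlocks_conjTranspose, fromBlocks_multiply, fromBlocks_multiply]
    simp only [Matrix.zero_mul, Matrix.mul_zero, add_zero, zero_add, conjTranspose_zero,
      Matrix.mul_assoc, h₁₁, h₁₂, h₂₁, h₂₂]

theorem pIndex_fromBlocks_eq_add (hdeg : ∀ p, deg p < j)
    (hP : ∀ p q, P p q ≠ 0 → deg q = deg p + 1) (hPP : Pᴴ * P = degreeGeProj deg 1)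
    (hQ : ∀ p b, Q p b ≠ 0 → deg p + 1 = j) (hQC : Qᴴ * Q + Cᴴ * C = 1) :
    (fromBlocks P Q 0 C).pIndex = j + C.pIndex :=
  pIndex_eq_add_of_isPartialIsometry_pow_iff _ _ j fun i => by
    rw [isPartialIsometry_iff_isIdempotentElem, isPartialIsometry_iff_isIdempotentElem,
      conjTranspose_mul_self_fromBlocks_pow hdeg hP hPP hQ hQC,
      isIdempotentElem_fromBlocks_zero_zero_iff]
    exact and_iff_right (isIdempotentElem_degreeGeProj deg i)

end Graded

theorem conjTranspose_mul_self_of_sigma_single {R ι Y : Type*} [NonUnitalNonAssocSemiring R]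
    [StarRing R] [Fintype ι] [DecidableEq ι] {β : ι → Type*} [∀ i, Fintype (β i)] [Fintype Y]
    {Q : Matrix (Σ i, β i) Y R} {i₀ : ι} {B : Matrix (β i₀) Y R}
    (hQ₀ : ∀ a b, Q ⟨i₀, a⟩ b = B a b) (hQ : ∀ i ≠ i₀, ∀ a b, Q ⟨i, a⟩ b = 0) :
    Qᴴ * Q = Bᴴ * B := by
  ext a b
  simp only [mul_apply, conjTranspose_apply, Fintype.sum_sigma]
  rw [Finset.sum_eq_single i₀ (fun i _ hi => by simp [hQ i hi]) (by simp)]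
  simp [hQ₀]

theorem conjTranspose_mul_self_of_superdiagonal {j : ℕ} {β : Fin j → Type*}
    [∀ ℓ, Fintype (β ℓ)] [∀ ℓ, DecidableEq (β ℓ)] {P : Matrix (Σ ℓ, β ℓ) (Σ ℓ, β ℓ) ℂ}
    {As : ∀ (ℓ : Fin j) (h : (ℓ : ℕ) + 1 < j), Matrix (β ℓ) (β ⟨(ℓ : ℕ) + 1, h⟩) ℂ}
    (hAs : ∀ ℓ h, (As ℓ h)ᴴ * As ℓ h = 1)
    (hP₁ : ∀ ℓ h a b, P ⟨ℓ, a⟩ ⟨⟨(ℓ : ℕ) + 1, h⟩, b⟩ = As ℓ h a b)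
    (hP₂ : ∀ (ℓ ℓ' : Fin j) a b, (ℓ' : ℕ) ≠ (ℓ : ℕ) + 1 → P ⟨ℓ, a⟩ ⟨ℓ', b⟩ = 0) :
    Pᴴ * P = degreeGeProj (fun p => (p.1 : ℕ)) 1 := by
  ext ⟨l, a⟩ ⟨l', b⟩
  simp only [mul_apply, conjTranspose_apply, degreeGeProj, diagonal_apply]
  by_cases hl : l' = l
  · subst hl
    obtain ⟨_ | t, hl⟩ := l'
    · rw [Finset.sum_eq_zero fun p _ => by
        rw [hP₂ _ _ _ a (Nat.succ_ne_zero _).symm, star_zero, zero_mul]]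
      simp
    · rw [Fintype.sum_sigma, Finset.sum_eq_single ⟨t, by omega⟩]
      · have := congrFun (congrFun (hAs ⟨t, by omega⟩ hl) a) b
        simp only [mul_apply, conjTranspose_apply, one_apply] at this
        simp only [hP₁ ⟨t, _⟩ hl, this, Sigma.mk.inj_iff, heq_eq_eq, true_and, Nat.le_add_left,
          if_true]
      · intro ℓ _ hℓ
        refine Finset.sum_eq_zero fun c _ => ?_
        rw [hP₂ _ _ _ a (fun h => hℓ (Fin.ext (by simp only at h ⊢; omega))), star_zero, zero_mul]
      · simp
  · rw [Finset.sum_eq_zero fun p _ => ?_]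
    · simp [Ne.symm hl]
    by_cases hp : (l : ℕ) = p.1 + 1
    · rw [hP₂ _ _ _ b (fun h => hl (Fin.ext (by omega))), mul_zero]
    · rw [hP₂ _ _ _ a hp, star_zero, zero_mul]

end Matrix

theorem pIndex_eq_of_unitarilySimilar_blockForm_general (j m : ℕ) (hj : 0 < j) (ns : Fin j → ℕ)
    (A' : Matrix ((Σ ℓ : Fin j, Fin (ns ℓ)) ⊕ Fin m) ((Σ ℓ : Fin j, Fin (ns ℓ)) ⊕ Fin m) ℂ)
    (As : ∀ (ℓ : Fin j) (h : (ℓ : ℕ) + 1 < j),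
      Matrix (Fin (ns ℓ)) (Fin (ns ⟨(ℓ : ℕ) + 1, h⟩)) ℂ)
    (B : Matrix (Fin (ns ⟨j - 1, Nat.sub_lt hj Nat.one_pos⟩)) (Fin m) ℂ)
    (C : Matrix (Fin m) (Fin m) ℂ)
    (hAs : ∀ (ℓ : Fin j) (h : (ℓ : ℕ) + 1 < j), (As ℓ h)ᴴ * As ℓ h = 1)
    (hBC : Bᴴ * B + Cᴴ * C = 1)
    (hblk₁ : ∀ (ℓ : Fin j) (h : (ℓ : ℕ) + 1 < j) (a : Fin (ns ℓ))
      (b : Fin (ns ⟨(ℓ : ℕ) + 1, h⟩)),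
      A' (Sum.inl ⟨ℓ, a⟩) (Sum.inl ⟨⟨(ℓ : ℕ) + 1, h⟩, b⟩) = As ℓ h a b)
    (hblk₂ : ∀ (ℓ ℓ' : Fin j) (a : Fin (ns ℓ)) (b : Fin (ns ℓ')), (ℓ' : ℕ) ≠ (ℓ : ℕ) + 1 →
      A' (Sum.inl ⟨ℓ, a⟩) (Sum.inl ⟨ℓ', b⟩) = 0)
    (hblk₃ : ∀ (a : Fin (ns ⟨j - 1, Nat.sub_lt hj Nat.one_pos⟩)) (b : Fin m),
      A' (Sum.inl ⟨⟨j - 1, Nat.sub_lt hj Nat.one_pos⟩, a⟩) (Sum.inr b) = B a b)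
    (hblk₄ : ∀ (ℓ : Fin j), (ℓ : ℕ) ≠ j - 1 → ∀ (a : Fin (ns ℓ)) (b : Fin m),
      A' (Sum.inl ⟨ℓ, a⟩) (Sum.inr b) = 0)
    (hblk₅ : ∀ a b : Fin m, A' (Sum.inr a) (Sum.inr b) = C a b)
    (hblk₆ : ∀ (a : Fin m) (ℓ : Fin j) (b : Fin (ns ℓ)), A' (Sum.inr a) (Sum.inl ⟨ℓ, b⟩) = 0)
    (n : ℕ) (A : Matrix (Fin n) (Fin n) ℂ)
    (hsim : A.UnitarilySimilarTo A') :
    A.pIndex = (j : ℕ∞) + C.pIndex := by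
  obtain ⟨U, hU₁, hU₂, hA'⟩ := hsim
  have h₂₁ : toBlocks₂₁ A' = 0 := by
    ext a ⟨ℓ, b⟩
    exact hblk₆ a ℓ b
  have h₂₂ : toBlocks₂₂ A' = C := ext hblk₅
  rw [← pIndex_conj hU₁ hU₂, ← hA', ← fromBlocks_toBlocks A', h₂₁, h₂₂]
  refine pIndex_fromBlocks_eq_add (deg := fun p => (p.1 : ℕ)) (fun p => p.1.isLt) ?_
    (conjTranspose_mul_self_of_superdiagonal hAs hblk₁ hblk₂) ?_ ?_
  · exact fun p q hpq => by_contra fun h => hpq (hblk₂ _ _ _ _ h)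
  · exact fun p b hpb => by_contra fun h => hpb (hblk₄ p.1 (by omega) _ _)
  · rw [conjTranspose_mul_self_of_sigma_single hblk₃ fun ℓ hℓ => hblk₄ ℓ fun h => hℓ (Fin.ext h),
      hBC]

/-- **Lemma 3.2 (a).** If the `n`-by-`n` matrix `A` is unitarily similar to the block matrix
`A'` on `ℂ^{n₁} ⊕ ⋯ ⊕ ℂ^{n_j} ⊕ ℂ^m` with superdiagonal blocks `A₁, …, A_{j-1}` (with
`A_ℓ* A_ℓ = I`), `(j, j+1)` block `B`, `(j+1, j+1)` block `C` (with `B*B + C*C = I`), and all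
other blocks zero, where `1 ≤ j ≤ a(A)`, then `p(A) = j + p(C)`. -/
theorem pIndex_eq_of_unitarilySimilar_blockForm (j m : ℕ) (hj : 0 < j) (ns : Fin j → ℕ)
    (A' : Matrix ((Σ ℓ : Fin j, Fin (ns ℓ)) ⊕ Fin m) ((Σ ℓ : Fin j, Fin (ns ℓ)) ⊕ Fin m) ℂ)
    (As : ∀ (ℓ : Fin j) (h : (ℓ : ℕ) + 1 < j),
      Matrix (Fin (ns ℓ)) (Fin (ns ⟨(ℓ : ℕ) + 1, h⟩)) ℂ)
    (B : Matrix (Fin (ns ⟨j - 1, Nat.sub_lt hj Nat.one_pos⟩)) (Fin m) ℂ)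
    (C : Matrix (Fin m) (Fin m) ℂ)
    (hAs : ∀ (ℓ : Fin j) (h : (ℓ : ℕ) + 1 < j), (As ℓ h)ᴴ * As ℓ h = 1)
    (hBC : Bᴴ * B + Cᴴ * C = 1)
    (hblk₁ : ∀ (ℓ : Fin j) (h : (ℓ : ℕ) + 1 < j) (a : Fin (ns ℓ))
      (b : Fin (ns ⟨(ℓ : ℕ) + 1, h⟩)),
      A' (Sum.inl ⟨ℓ, a⟩) (Sum.inl ⟨⟨(ℓ : ℕ) + 1, h⟩, b⟩) = As ℓ h a b)
    (hblk₂ : ∀ (ℓ ℓ' : Fin j) (a : Fin (ns ℓ)) (b : Fin (ns ℓ')), (ℓ' : ℕ) ≠ (ℓ : ℕ) + 1 →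
      A' (Sum.inl ⟨ℓ, a⟩) (Sum.inl ⟨ℓ', b⟩) = 0)
    (hblk₃ : ∀ (a : Fin (ns ⟨j - 1, Nat.sub_lt hj Nat.one_pos⟩)) (b : Fin m),
      A' (Sum.inl ⟨⟨j - 1, Nat.sub_lt hj Nat.one_pos⟩, a⟩) (Sum.inr b) = B a b)
    (hblk₄ : ∀ (ℓ : Fin j), (ℓ : ℕ) ≠ j - 1 → ∀ (a : Fin (ns ℓ)) (b : Fin m),
      A' (Sum.inl ⟨ℓ, a⟩) (Sum.inr b) = 0)
    (hblk₅ : ∀ a b : Fin m, A' (Sum.inr a) (Sum.inr b) = C a b)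
    (hblk₆ : ∀ (a : Fin m) (ℓ : Fin j) (b : Fin (ns ℓ)), A' (Sum.inr a) (Sum.inl ⟨ℓ, b⟩) = 0)
    (n : ℕ) (A : Matrix (Fin n) (Fin n) ℂ)
    (hn : n = (∑ ℓ : Fin j, ns ℓ) + m)
    (hsim : A.UnitarilySimilarTo A')
    (hja : j ≤ A.ascent) :
    A.pIndex = (j : ℕ∞) + C.pIndex :=
  pIndex_eq_of_unitarilySimilar_blockForm_general j m hj ns A' As B C hAs hBC hblk₁ hblk₂ hblk₃
    hblk₄ hblk₅ hblk₆ n A hsim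

end
end

section
/- Let A be an n-by-n complex matrix which is unitarily similar to the upper-triangular block matrix A′ with blocks A₁, …, A_{j−1} on the superdiagonal positions, then B and C, acting on ℂⁿ = ℂ^{n₁} ⊕ ⋯ ⊕ ℂ^{n_j} ⊕ ℂ^m (A′ has zero diagonal blocks in the first j positions, A_ℓ is the (ℓ, ℓ+1) block for 1 ≤ ℓ ≤ j−1, B is the (j, j+1) block, C is the (j+1, j+1) block, and all other blocks are zero), where A_ℓ*A_ℓ = I_{n_{ℓ+1}} for 1 ≤ ℓ ≤ j − 1 and B*B + C*C = I_m, and where 1 ≤ j ≤ a(A). Then a(A) = j + a(C). -/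
open Matrix

noncomputable section

/-
Unitary similarity only moves kernels by a bijection, so `a(A) = a(A')`. For the block matrix
`A'`, write `x = (x₁, …, x_j, y)`. By induction on `k`, `A'^k x = 0` iff `x_ℓ = 0` for all `ℓ > k`
and `C^(k-j) y = 0`: each step applies `A'` once, the isometries `A_ℓ` pass the vanishing of
block `ℓ` of `A'x` back to `x_{ℓ+1}`, and `B*B + C*C = I` turns `By = Cy = 0` into `y = 0`. So for
`k ≥ j` the kernel of `A'^k` is the preimage of `ker C^(k-j)` under `x ↦ y`, and once the ascent
is known to be at least `j` it equals `j + a(C)`.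
-/

theorem Nat.sInf_eq_add_sInf_of_add_mem_iff {S T : Set ℕ} {j : ℕ} (hj : j ≤ sInf S)
    (hST : ∀ t, j + t ∈ S ↔ t ∈ T) : sInf S = j + sInf T := by
  rcases S.eq_empty_or_nonempty with rfl | hS
  · obtain rfl : j = 0 := by simpa using hj
    obtain rfl : T = ∅ := by ext t; simpa using (hST t).symm
    simp
  · have hsT : sInf S - j ∈ T := (hST _).1 (by rw [Nat.add_sub_cancel' hj]; exact Nat.sInf_mem hS)
    have hT : sInf T ≤ sInf S - j := Nat.sInf_le hsT
    have hS' : sInf S ≤ j + sInf T := Nat.sInf_le ((hST _).2 (Nat.sInf_mem ⟨_, hsT⟩))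
    omega

namespace Matrix

theorem mulVec_eq_zero_iff_of_mul_eq_one {ι κ R : Type*} [Fintype ι] [Fintype κ] [DecidableEq κ]
    [Semiring R] {P : Matrix κ ι R} {M : Matrix ι κ R} (h : P * M = 1) {v : κ → R} :
    M *ᵥ v = 0 ↔ v = 0 := by
  refine ⟨fun hv => ?_, fun hv => hv ▸ mulVec_zero M⟩
  rw [← one_mulVec v, ← h, ← mulVec_mulVec, hv, mulVec_zero]

theorem mulVec_and_mulVec_eq_zero_iff_of_add_eq_one {ι ι' κ R : Type*} [Fintype ι]
    [Fintype ι'] [Fintype κ] [DecidableEq κ] [Semiring R] {P : Matrix κ ι R} {M : Matrix ι κ R}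
    {Q : Matrix κ ι' R} {N : Matrix ι' κ R} (h : P * M + Q * N = 1) {v : κ → R} :
    M *ᵥ v = 0 ∧ N *ᵥ v = 0 ↔ v = 0 := by
  refine ⟨fun ⟨hM, hN⟩ => ?_, fun hv => hv ▸ ⟨mulVec_zero M, mulVec_zero N⟩⟩
  rw [← one_mulVec v, ← h, add_mulVec, ← mulVec_mulVec, ← mulVec_mulVec, hM, hN, mulVec_zero,
    mulVec_zero, add_zero]

variable {ι κ : Type*} [Fintype ι] [DecidableEq ι] [Fintype κ] [DecidableEq κ]

theorem ker_toEuclideanLin {𝕜 : Type*} [RCLike 𝕜] (M : Matrix ι ι 𝕜) :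
    LinearMap.ker (toEuclideanLin M) =
      (LinearMap.ker M.mulVecLin).comap (WithLp.linearEquiv 2 𝕜 (ι → 𝕜)).toLinearMap := by
  ext x
  simp [← WithLp.ofLp_eq_zero (p := 2)]

theorem ascent_eq_sInf_ker_mulVecLin (M : Matrix ι ι ℂ) :
    M.ascent =
      sInf {k | LinearMap.ker (M ^ k).mulVecLin = LinearMap.ker (M ^ (k + 1)).mulVecLin} := by
  simp only [ascent, ker_toEuclideanLin,
    (Submodule.comap_injective_of_surjective (LinearEquiv.surjective _)).eq_iff]

theorem pow_conj_of_mul_eq_one {U : Matrix ι κ ℂ} {V : Matrix κ ι ℂ} (hVU : V * U = 1)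
    (hUV : U * V = 1) (A : Matrix ι ι ℂ) (k : ℕ) : (V * A * U) ^ k = V * A ^ k * U := by
  induction k with
  | zero => simp [hVU]
  | succ k ih =>
    calc (V * A * U) ^ (k + 1) = V * A ^ k * (U * V) * A * U := by
          rw [pow_succ, ih]; simp only [Matrix.mul_assoc]
      _ = V * A ^ (k + 1) * U := by rw [hUV, Matrix.mul_one, pow_succ, Matrix.mul_assoc V]

theorem ker_mulVecLin_pow_conj {U : Matrix ι κ ℂ} {V : Matrix κ ι ℂ} (hVU : V * U = 1)
    (hUV : U * V = 1) (A : Matrix ι ι ℂ) (k : ℕ) :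
    LinearMap.ker ((V * A * U) ^ k).mulVecLin =
      (LinearMap.ker (A ^ k).mulVecLin).comap U.mulVecLin := by
  ext x
  simp only [LinearMap.mem_ker, Submodule.mem_comap, mulVecLin_apply,
    pow_conj_of_mul_eq_one hVU hUV, ← mulVec_mulVec, mulVec_eq_zero_iff_of_mul_eq_one hUV]

theorem ascent_conj {U : Matrix ι κ ℂ} {V : Matrix κ ι ℂ} (hVU : V * U = 1) (hUV : U * V = 1)
    (A : Matrix ι ι ℂ) : (V * A * U).ascent = A.ascent := by
  have hU : Function.Surjective U.mulVecLin := fun w =>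
    ⟨V *ᵥ w, by rw [mulVecLin_apply, mulVec_mulVec, hUV, one_mulVec]⟩
  simp only [ascent_eq_sInf_ker_mulVecLin, ker_mulVecLin_pow_conj hVU hUV,
    (Submodule.comap_injective_of_surjective hU).eq_iff]

theorem UnitarilySimilarTo.ascent_eq {A : Matrix ι ι ℂ} {A' : Matrix κ κ ℂ}
    (h : A.UnitarilySimilarTo A') : A'.ascent = A.ascent := by
  obtain ⟨U, hU₁, hU₂, rfl⟩ := h
  exact ascent_conj hU₁ hU₂ A

theorem ascent_eq_add_ascent {M : Matrix ι ι ℂ} {N : Matrix κ κ ℂ} {j : ℕ} (hj : j ≤ M.ascent)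
    (h : ∀ t, LinearMap.ker (M ^ (j + t)).mulVecLin = LinearMap.ker (M ^ (j + t + 1)).mulVecLin ↔
      LinearMap.ker (N ^ t).mulVecLin = LinearMap.ker (N ^ (t + 1)).mulVecLin) :
    M.ascent = j + N.ascent := by
  simp only [ascent_eq_sInf_ker_mulVecLin] at hj ⊢
  exact Nat.sInf_eq_add_sInf_of_add_mem_iff hj h

section BlockForm

variable {j : ℕ} {ns : Fin j → ℕ} {κ : Type*}

-- Blocks are indexed by `ℓ : ℕ` so that the shift `ℓ ↦ ℓ + 1` needs no `Fin` arithmetic.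
def BlocksVanishFrom (k : ℕ) (x : (Σ ℓ : Fin j, Fin (ns ℓ)) ⊕ κ → ℂ) : Prop :=
  ∀ (ℓ : ℕ) (hℓ : ℓ < j), k ≤ ℓ → ∀ a, x (Sum.inl ⟨⟨ℓ, hℓ⟩, a⟩) = 0

theorem eq_zero_iff_blocksVanishFrom_zero_and (x : (Σ ℓ : Fin j, Fin (ns ℓ)) ⊕ κ → ℂ) :
    x = 0 ↔ BlocksVanishFrom 0 x ∧ x ∘ Sum.inr = 0 := by
  refine ⟨?_, fun ⟨hx, hy⟩ => ?_⟩
  · rintro rfl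
    exact ⟨fun _ _ _ _ => rfl, rfl⟩
  · funext i
    rcases i with ⟨⟨ℓ, hℓ⟩, a⟩ | b
    · exact hx ℓ hℓ ℓ.zero_le a
    · exact congrFun hy b

theorem blocksVanishFrom_of_le {k : ℕ} (hk : j ≤ k) (x : (Σ ℓ : Fin j, Fin (ns ℓ)) ⊕ κ → ℂ) :
    BlocksVanishFrom k x :=
  fun _ hℓ hkℓ => absurd hℓ (by omega)

variable [Fintype κ] [DecidableEq κ]

structure IsShiftBlockForm (hj : 0 < j)
    (A' : Matrix ((Σ ℓ : Fin j, Fin (ns ℓ)) ⊕ κ) ((Σ ℓ : Fin j, Fin (ns ℓ)) ⊕ κ) ℂ)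
    (As : ∀ (ℓ : Fin j) (h : (ℓ : ℕ) + 1 < j),
      Matrix (Fin (ns ℓ)) (Fin (ns ⟨(ℓ : ℕ) + 1, h⟩)) ℂ)
    (B : Matrix (Fin (ns ⟨j - 1, Nat.sub_lt hj Nat.one_pos⟩)) κ ℂ)
    (C : Matrix κ κ ℂ) : Prop where
  conjTranspose_mul_self_As : ∀ (ℓ : Fin j) (h : (ℓ : ℕ) + 1 < j), (As ℓ h)ᴴ * As ℓ h = 1
  conjTranspose_mul_self_add : Bᴴ * B + Cᴴ * C = 1
  inl_inl_succ : ∀ (ℓ : Fin j) (h : (ℓ : ℕ) + 1 < j) (a : Fin (ns ℓ))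
      (b : Fin (ns ⟨(ℓ : ℕ) + 1, h⟩)),
      A' (Sum.inl ⟨ℓ, a⟩) (Sum.inl ⟨⟨(ℓ : ℕ) + 1, h⟩, b⟩) = As ℓ h a b
  inl_inl_of_ne_succ : ∀ (ℓ ℓ' : Fin j) (a : Fin (ns ℓ)) (b : Fin (ns ℓ')),
      (ℓ' : ℕ) ≠ (ℓ : ℕ) + 1 → A' (Sum.inl ⟨ℓ, a⟩) (Sum.inl ⟨ℓ', b⟩) = 0
  inl_last_inr : ∀ (a : Fin (ns ⟨j - 1, Nat.sub_lt hj Nat.one_pos⟩)) (b : κ),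
      A' (Sum.inl ⟨⟨j - 1, Nat.sub_lt hj Nat.one_pos⟩, a⟩) (Sum.inr b) = B a b
  inl_inr_of_ne_last : ∀ (ℓ : Fin j), (ℓ : ℕ) ≠ j - 1 → ∀ (a : Fin (ns ℓ)) (b : κ),
      A' (Sum.inl ⟨ℓ, a⟩) (Sum.inr b) = 0
  inr_inr : ∀ a b : κ, A' (Sum.inr a) (Sum.inr b) = C a b
  inr_inl : ∀ (a : κ) (ℓ : Fin j) (b : Fin (ns ℓ)), A' (Sum.inr a) (Sum.inl ⟨ℓ, b⟩) = 0

namespace IsShiftBlockForm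

variable {hj : 0 < j}
  {A' : Matrix ((Σ ℓ : Fin j, Fin (ns ℓ)) ⊕ κ) ((Σ ℓ : Fin j, Fin (ns ℓ)) ⊕ κ) ℂ}
  {As : ∀ (ℓ : Fin j) (h : (ℓ : ℕ) + 1 < j), Matrix (Fin (ns ℓ)) (Fin (ns ⟨(ℓ : ℕ) + 1, h⟩)) ℂ}
  {B : Matrix (Fin (ns ⟨j - 1, Nat.sub_lt hj Nat.one_pos⟩)) κ ℂ} {C : Matrix κ κ ℂ}
  (x : (Σ ℓ : Fin j, Fin (ns ℓ)) ⊕ κ → ℂ)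

theorem mulVec_inr (h : IsShiftBlockForm hj A' As B C) (b : κ) :
    (A' *ᵥ x) (Sum.inr b) = (C *ᵥ (x ∘ Sum.inr)) b := by
  simp only [mulVec, dotProduct, Fintype.sum_sum_type, h.inr_inr, h.inr_inl,
    zero_mul, Finset.sum_const_zero, zero_add, Function.comp_apply]

theorem mulVec_inl_last (h : IsShiftBlockForm hj A' As B C)
    (a : Fin (ns ⟨j - 1, Nat.sub_lt hj Nat.one_pos⟩)) :
    (A' *ᵥ x) (Sum.inl ⟨⟨j - 1, Nat.sub_lt hj Nat.one_pos⟩, a⟩) = (B *ᵥ (x ∘ Sum.inr)) a := by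
  have hzero (ℓ' : Fin j) (b : Fin (ns ℓ')) :
      A' (Sum.inl ⟨⟨j - 1, Nat.sub_lt hj Nat.one_pos⟩, a⟩) (Sum.inl ⟨ℓ', b⟩) = 0 :=
    h.inl_inl_of_ne_succ _ _ _ _ (by dsimp only; omega)
  simp only [mulVec, dotProduct, Fintype.sum_sum_type, h.inl_last_inr, hzero,
    zero_mul, Finset.sum_const_zero, zero_add, Function.comp_apply]

theorem mulVec_inl_of_succ_lt (h : IsShiftBlockForm hj A' As B C) (ℓ : Fin j)
    (hℓ : (ℓ : ℕ) + 1 < j) (a : Fin (ns ℓ)) :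
    (A' *ᵥ x) (Sum.inl ⟨ℓ, a⟩) =
      (As ℓ hℓ *ᵥ fun b => x (Sum.inl ⟨⟨(ℓ : ℕ) + 1, hℓ⟩, b⟩)) a := by
  simp only [mulVec, dotProduct, Fintype.sum_sum_type, Fintype.sum_sigma,
    h.inl_inr_of_ne_last ℓ (by omega), zero_mul, Finset.sum_const_zero, add_zero]
  rw [Finset.sum_eq_single (⟨(ℓ : ℕ) + 1, hℓ⟩ : Fin j)]
  · simp only [h.inl_inl_succ]
  · intro ℓ' _ hne
    simp only [h.inl_inl_of_ne_succ ℓ ℓ' a _ (fun hc => hne (Fin.ext hc)), zero_mul,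
      Finset.sum_const_zero]
  · simp

theorem blocksVanishFrom_mulVec_and_iff (h : IsShiftBlockForm hj A' As B C) {k : ℕ}
    (hk : k < j) :
    BlocksVanishFrom k (A' *ᵥ x) ∧ C *ᵥ (x ∘ Sum.inr) = 0 ↔
      BlocksVanishFrom (k + 1) x ∧ x ∘ Sum.inr = 0 := by
  constructor
  · rintro ⟨hAx, hCy⟩
    have hBy : B *ᵥ (x ∘ Sum.inr) = 0 := funext fun a => by
      rw [← h.mulVec_inl_last]
      exact hAx (j - 1) _ (by omega) a
    have hy := (mulVec_and_mulVec_eq_zero_iff_of_add_eq_one h.conjTranspose_mul_self_add).1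
      ⟨hBy, hCy⟩
    refine ⟨?_, hy⟩
    rintro (_ | ℓ) hℓ hkℓ a
    · omega
    · have hAsx : As ⟨ℓ, by omega⟩ hℓ *ᵥ (fun b => x (Sum.inl ⟨⟨ℓ + 1, hℓ⟩, b⟩)) = 0 :=
        funext fun b => by
          rw [← h.mulVec_inl_of_succ_lt]
          exact hAx ℓ _ (by omega) b
      exact congrFun ((mulVec_eq_zero_iff_of_mul_eq_one (h.conjTranspose_mul_self_As _ _)).1 hAsx) a
  · rintro ⟨hx, hy⟩
    refine ⟨fun ℓ hℓ hkℓ a => ?_, by rw [hy, mulVec_zero]⟩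
    rcases Nat.lt_or_ge (ℓ + 1) j with hsucc | hlast
    · have hxsucc : (fun b => x (Sum.inl ⟨⟨ℓ + 1, hsucc⟩, b⟩)) = 0 :=
        funext fun b => hx (ℓ + 1) hsucc (by omega) b
      rw [h.mulVec_inl_of_succ_lt x ⟨ℓ, hℓ⟩ hsucc, hxsucc, mulVec_zero, Pi.zero_apply]
    · obtain rfl : ℓ = j - 1 := by omega
      rw [h.mulVec_inl_last, hy, mulVec_zero, Pi.zero_apply]

theorem mulVec_pow_eq_zero_iff (h : IsShiftBlockForm hj A' As B C) (k : ℕ) :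
    (A' ^ k) *ᵥ x = 0 ↔ BlocksVanishFrom k x ∧ (C ^ (k - j)) *ᵥ (x ∘ Sum.inr) = 0 := by
  induction k generalizing x with
  | zero => simpa using (eq_zero_iff_blocksVanishFrom_zero_and x)
  | succ k ih =>
    rw [pow_succ, ← mulVec_mulVec, ih, show (A' *ᵥ x) ∘ Sum.inr = C *ᵥ (x ∘ Sum.inr) from
      funext (h.mulVec_inr x), mulVec_mulVec, ← pow_succ]
    by_cases hkj : j ≤ k
    · simp only [blocksVanishFrom_of_le hkj, blocksVanishFrom_of_le (hkj.trans k.le_succ),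
        true_and, Nat.sub_add_comm hkj]
    · rw [Nat.sub_eq_zero_of_le (by omega : k ≤ j), Nat.sub_eq_zero_of_le (by omega : k + 1 ≤ j),
        pow_one, pow_zero, one_mulVec]
      exact h.blocksVanishFrom_mulVec_and_iff x (by omega)

theorem ker_mulVecLin_pow_add (h : IsShiftBlockForm hj A' As B C) (t : ℕ) :
    LinearMap.ker (A' ^ (j + t)).mulVecLin =
      (LinearMap.ker (C ^ t).mulVecLin).comap (LinearMap.funLeft ℂ ℂ Sum.inr) := by
  ext x
  simp only [LinearMap.mem_ker, Submodule.mem_comap, mulVecLin_apply,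
    h.mulVec_pow_eq_zero_iff, blocksVanishFrom_of_le (Nat.le_add_right j t), true_and,
    Nat.add_sub_cancel_left]
  rfl

theorem ascent_eq (h : IsShiftBlockForm hj A' As B C) (hja : j ≤ A'.ascent) :
    A'.ascent = j + C.ascent := by
  have hinr :
      Function.Surjective (LinearMap.funLeft ℂ ℂ (Sum.inr : κ → (Σ ℓ : Fin j, Fin (ns ℓ)) ⊕ κ)) :=
    LinearMap.funLeft_surjective_of_injective _ _ _ Sum.inr_injective
  refine ascent_eq_add_ascent hja fun t => ?_
  rw [add_assoc, h.ker_mulVecLin_pow_add, h.ker_mulVecLin_pow_add,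
    (Submodule.comap_injective_of_surjective hinr).eq_iff]

end IsShiftBlockForm

end BlockForm

end Matrix

theorem ascent_eq_of_unitarilySimilar_blockForm_general (j m : ℕ) (hj : 0 < j) (ns : Fin j → ℕ)
    (A' : Matrix ((Σ ℓ : Fin j, Fin (ns ℓ)) ⊕ Fin m) ((Σ ℓ : Fin j, Fin (ns ℓ)) ⊕ Fin m) ℂ)
    (As : ∀ (ℓ : Fin j) (h : (ℓ : ℕ) + 1 < j),
      Matrix (Fin (ns ℓ)) (Fin (ns ⟨(ℓ : ℕ) + 1, h⟩)) ℂ)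
    (B : Matrix (Fin (ns ⟨j - 1, Nat.sub_lt hj Nat.one_pos⟩)) (Fin m) ℂ)
    (C : Matrix (Fin m) (Fin m) ℂ)
    (hAs : ∀ (ℓ : Fin j) (h : (ℓ : ℕ) + 1 < j), (As ℓ h)ᴴ * As ℓ h = 1)
    (hBC : Bᴴ * B + Cᴴ * C = 1)
    (hblk₁ : ∀ (ℓ : Fin j) (h : (ℓ : ℕ) + 1 < j) (a : Fin (ns ℓ))
      (b : Fin (ns ⟨(ℓ : ℕ) + 1, h⟩)),
      A' (Sum.inl ⟨ℓ, a⟩) (Sum.inl ⟨⟨(ℓ : ℕ) + 1, h⟩, b⟩) = As ℓ h a b)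
    (hblk₂ : ∀ (ℓ ℓ' : Fin j) (a : Fin (ns ℓ)) (b : Fin (ns ℓ')), (ℓ' : ℕ) ≠ (ℓ : ℕ) + 1 →
      A' (Sum.inl ⟨ℓ, a⟩) (Sum.inl ⟨ℓ', b⟩) = 0)
    (hblk₃ : ∀ (a : Fin (ns ⟨j - 1, Nat.sub_lt hj Nat.one_pos⟩)) (b : Fin m),
      A' (Sum.inl ⟨⟨j - 1, Nat.sub_lt hj Nat.one_pos⟩, a⟩) (Sum.inr b) = B a b)
    (hblk₄ : ∀ (ℓ : Fin j), (ℓ : ℕ) ≠ j - 1 → ∀ (a : Fin (ns ℓ)) (b : Fin m),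
      A' (Sum.inl ⟨ℓ, a⟩) (Sum.inr b) = 0)
    (hblk₅ : ∀ a b : Fin m, A' (Sum.inr a) (Sum.inr b) = C a b)
    (hblk₆ : ∀ (a : Fin m) (ℓ : Fin j) (b : Fin (ns ℓ)), A' (Sum.inr a) (Sum.inl ⟨ℓ, b⟩) = 0)
    (n : ℕ) (A : Matrix (Fin n) (Fin n) ℂ)
    (hsim : A.UnitarilySimilarTo A')
    (hja : j ≤ A.ascent) :
    A.ascent = j + C.ascent := by
  have hA' : IsShiftBlockForm hj A' As B C :=
    ⟨hAs, hBC, hblk₁, hblk₂, hblk₃, hblk₄, hblk₅, hblk₆⟩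
  rw [← hsim.ascent_eq] at hja ⊢
  exact hA'.ascent_eq hja

/-- **Lemma 3.2 (b).** If the `n`-by-`n` matrix `A` is unitarily similar to the block matrix
`A'` on `ℂ^{n₁} ⊕ ⋯ ⊕ ℂ^{n_j} ⊕ ℂ^m` with superdiagonal blocks `A₁, …, A_{j-1}` (with
`A_ℓ* A_ℓ = I`), `(j, j+1)` block `B`, `(j+1, j+1)` block `C` (with `B*B + C*C = I`), and all
other blocks zero, where `1 ≤ j ≤ a(A)`, then `a(A) = j + a(C)`. -/
theorem ascent_eq_of_unitarilySimilar_blockForm (j m : ℕ) (hj : 0 < j) (ns : Fin j → ℕ)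
    (A' : Matrix ((Σ ℓ : Fin j, Fin (ns ℓ)) ⊕ Fin m) ((Σ ℓ : Fin j, Fin (ns ℓ)) ⊕ Fin m) ℂ)
    (As : ∀ (ℓ : Fin j) (h : (ℓ : ℕ) + 1 < j),
      Matrix (Fin (ns ℓ)) (Fin (ns ⟨(ℓ : ℕ) + 1, h⟩)) ℂ)
    (B : Matrix (Fin (ns ⟨j - 1, Nat.sub_lt hj Nat.one_pos⟩)) (Fin m) ℂ)
    (C : Matrix (Fin m) (Fin m) ℂ)
    (hAs : ∀ (ℓ : Fin j) (h : (ℓ : ℕ) + 1 < j), (As ℓ h)ᴴ * As ℓ h = 1)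
    (hBC : Bᴴ * B + Cᴴ * C = 1)
    (hblk₁ : ∀ (ℓ : Fin j) (h : (ℓ : ℕ) + 1 < j) (a : Fin (ns ℓ))
      (b : Fin (ns ⟨(ℓ : ℕ) + 1, h⟩)),
      A' (Sum.inl ⟨ℓ, a⟩) (Sum.inl ⟨⟨(ℓ : ℕ) + 1, h⟩, b⟩) = As ℓ h a b)
    (hblk₂ : ∀ (ℓ ℓ' : Fin j) (a : Fin (ns ℓ)) (b : Fin (ns ℓ')), (ℓ' : ℕ) ≠ (ℓ : ℕ) + 1 →
      A' (Sum.inl ⟨ℓ, a⟩) (Sum.inl ⟨ℓ', b⟩) = 0)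
    (hblk₃ : ∀ (a : Fin (ns ⟨j - 1, Nat.sub_lt hj Nat.one_pos⟩)) (b : Fin m),
      A' (Sum.inl ⟨⟨j - 1, Nat.sub_lt hj Nat.one_pos⟩, a⟩) (Sum.inr b) = B a b)
    (hblk₄ : ∀ (ℓ : Fin j), (ℓ : ℕ) ≠ j - 1 → ∀ (a : Fin (ns ℓ)) (b : Fin m),
      A' (Sum.inl ⟨ℓ, a⟩) (Sum.inr b) = 0)
    (hblk₅ : ∀ a b : Fin m, A' (Sum.inr a) (Sum.inr b) = C a b)
    (hblk₆ : ∀ (a : Fin m) (ℓ : Fin j) (b : Fin (ns ℓ)), A' (Sum.inr a) (Sum.inl ⟨ℓ, b⟩) = 0)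
    (n : ℕ) (A : Matrix (Fin n) (Fin n) ℂ)
    (hn : n = (∑ ℓ : Fin j, ns ℓ) + m)
    (hsim : A.UnitarilySimilarTo A')
    (hja : j ≤ A.ascent) :
    A.ascent = j + C.ascent :=
  ascent_eq_of_unitarilySimilar_blockForm_general j m hj ns A' As B C hAs hBC hblk₁ hblk₂ hblk₃
    hblk₄ hblk₅ hblk₆ n A hsim hja
end
end
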